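/- arXiv:1612.06480 — 9 statements merged into one kernel-verified Lean document; each statement's English description precedes it below -/
import Mathlib

section
/- Let s ∈ ℂ with Re(s) > 2. Then the doubly-indexed family over (i, k) ∈ I × {k ∈ ℕ : k ≥ 1} given by (1 − exp(−s·k·ℓ i)) is multipliable, i.e. the infinite product ∏_{i ∈ I} ∏_{k=1}^{∞} (1 − exp(−s·k·ℓ i)) converges absolutely. -/
/-!
With `x i = exp (-Re s · ℓ i)`, the factor `(i, k)` is `1 - w` with `‖w‖ = x i ^ k`, so it suffices
that `∑_{i, k ≥ 1} x i ^ k = ∑_i x i / (1 - x i)` is finite. Since `Re s > 2 > δ`, `x i` is dominated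
by `exp (-δ ℓ i)`, hence summable, hence eventually below `1/2`, where `x / (1 - x) ≤ 2 x`.
-/

theorem summable_div_one_sub_of_summable {ι : Type*} {x : ι → ℝ} (hx : Summable x) :
    Summable fun i => x i / (1 - x i) := by
  refine (hx.abs.mul_left 2).of_norm_bounded_eventually ?_
  filter_upwards [hx.abs.tendsto_cofinite_zero.eventually_le_const (by norm_num : (0:ℝ) < 1 / 2)]
    with i hi
  have hden : 1 / 2 ≤ |1 - x i| := by
    have := abs_sub_abs_le_abs_sub 1 (x i)
    rw [abs_one] at this
    linarith
  rw [Real.norm_eq_abs, abs_div, div_le_iff₀ (by linarith)]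
  nlinarith [abs_nonneg (x i)]

theorem hasSum_geometric_subtype_one_le {x : ℝ} (h₀ : 0 ≤ x) (h₁ : x < 1) :
    HasSum (fun k : {k : ℕ // 1 ≤ k} => x ^ (k : ℕ)) (x / (1 - x)) := by
  refine hasSum_pnat_iff_hasSum_succ (f := fun k => x ^ k) |>.2 ?_
  simpa [pow_succ', div_eq_mul_inv] using (hasSum_geometric_of_lt_one h₀ h₁).mul_left x

theorem summable_prod_pow_of_summable {ι : Type*} {x : ι → ℝ} (h₀ : ∀ i, 0 ≤ x i)
    (h₁ : ∀ i, x i < 1) (hx : Summable x) :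
    Summable fun p : ι × {k : ℕ // 1 ≤ k} => x p.1 ^ (p.2 : ℕ) := by
  refine (summable_prod_of_nonneg fun p => pow_nonneg (h₀ p.1) _).2
    ⟨fun i => (hasSum_geometric_subtype_one_le (h₀ i) (h₁ i)).summable, ?_⟩
  simpa only [fun i => (hasSum_geometric_subtype_one_le (h₀ i) (h₁ i)).tsum_eq] using
    summable_div_one_sub_of_summable hx

theorem statement0_general {I : Type*} (ℓ : I → ℝ)
    (hℓ : ∀ i, 0 < ℓ i) (δ : ℝ) (hδ : δ < 2)
    (hsum : Summable fun i => Real.exp (-δ * ℓ i))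
    (s : ℂ) (hs : 2 < s.re) :
    Multipliable (fun p : I × {k : ℕ // 1 ≤ k} =>
      (1 - Complex.exp (-s * ((p.2 : ℕ) : ℂ) * (ℓ p.1 : ℂ)))) := by
  set x : I → ℝ := fun i => Real.exp (-s.re * ℓ i)
  have hx_lt_one (i : I) : x i < 1 := Real.exp_lt_one_iff.2 (by nlinarith [hℓ i])
  have hx_le (i : I) : x i ≤ Real.exp (-δ * ℓ i) := Real.exp_le_exp.2 (by nlinarith [hℓ i])
  have hnorm (p : I × {k : ℕ // 1 ≤ k}) :
      ‖-Complex.exp (-s * ((p.2 : ℕ) : ℂ) * (ℓ p.1 : ℂ))‖ = x p.1 ^ (p.2 : ℕ) := by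
    rw [norm_neg, Complex.norm_exp, ← Real.exp_nat_mul]
    simp [mul_left_comm, mul_assoc]
  simpa only [sub_eq_add_neg] using multipliable_one_add_of_summable <| by
    simpa only [hnorm] using summable_prod_pow_of_summable (fun i => (Real.exp_pos _).le)
      hx_lt_one (hsum.of_nonneg_of_le (fun i => (Real.exp_pos _).le) hx_le)

/-- absolute convergence of the double infinite product
`∏_{i ∈ I} ∏_{k ≥ 1} (1 − exp(−s·k·ℓ i))` for `Re(s) > 2`. -/
theorem statement0 {I : Type*} [Countable I] (ℓ θ : I → ℝ)
    (hℓ : ∀ i, 0 < ℓ i) (δ : ℝ) (hδ : δ < 2)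
    (hsum : Summable fun i => Real.exp (-δ * ℓ i))
    (s : ℂ) (hs : 2 < s.re) :
    Multipliable (fun p : I × {k : ℕ // 1 ≤ k} =>
      (1 - Complex.exp (-s * ((p.2 : ℕ) : ℂ) * (ℓ p.1 : ℂ)))) :=
  statement0_general ℓ hℓ δ hδ hsum s hs
end

section
/- Let k ∈ ℤ and s ∈ ℂ with Re(s) > 2. Then: (a) the family over i ∈ I given by (1 − exp(i(k/2)·θ i)·exp(−s·ℓ i)) is multipliable and its product R(k, s) is nonzero; (b) the family over (i, p, q) ∈ I × ℕ × ℕ given by (1 − exp(i(k/2)·θ i)·exp(−p(ℓ i + i·θ i))·exp(−q(ℓ i − i·θ i))·exp(−s·ℓ i)) is multipliable and its product Z(k, s) is nonzero. -/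
/-!
Every factor has the form `1 - a` with `‖a‖ < 1`, so both products converge to nonzero limits
as soon as `∑ ‖a‖ < ∞`. For `R`, `‖a_i‖ = e^{-Re(s) ℓ_i} ≤ e^{-δ ℓ_i}`. For `Z`,
`‖a_{i,p,q}‖ = e^{-(Re(s) + p + q) ℓ_i}`; the double geometric series in `p, q` sums to
`e^{-Re(s) ℓ_i} (1 - e^{-ℓ_i})^{-2}`, and summability of `e^{-δ ℓ_i}` forces `ℓ_i → ∞` along the
cofinite filter, so the factor `(1 - e^{-ℓ_i})^{-2}` is eventually at most `4`.
-/

/-- `R(σ_k, s) = ∏_{i ∈ I} (1 − e^{i(k/2)θ_i} e^{−s ℓ_i})`. -/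
noncomputable def Rz {I : Type*} (ℓ θ : I → ℝ) (k : ℤ) (s : ℂ) : ℂ :=
  ∏' i : I, (1 - Complex.exp (Complex.I * ((k : ℂ) / 2) * (θ i : ℂ))
    * Complex.exp (-s * (ℓ i : ℂ)))

/-- Selberg zeta function
`Z(σ_k, s) = ∏_{i ∈ I} ∏_{p,q ≥ 0} (1 − e^{i(k/2)θ_i} e^{−p(ℓ_i+iθ_i)} e^{−q(ℓ_i−iθ_i)} e^{−s ℓ_i})`. -/
noncomputable def Zs {I : Type*} (ℓ θ : I → ℝ) (k : ℤ) (s : ℂ) : ℂ :=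
  ∏' x : I × ℕ × ℕ,
    (1 - Complex.exp (Complex.I * ((k : ℂ) / 2) * (θ x.1 : ℂ))
       * Complex.exp (-(x.2.1 : ℂ) * ((ℓ x.1 : ℂ) + Complex.I * (θ x.1 : ℂ)))
       * Complex.exp (-(x.2.2 : ℂ) * ((ℓ x.1 : ℂ) - Complex.I * (θ x.1 : ℂ)))
       * Complex.exp (-s * (ℓ x.1 : ℂ)))

open Filter

section OneSub

variable {ι R : Type*} [NormedCommRing R] [NormOneClass R] [CompleteSpace R] [NormMulClass R]

theorem multipliable_one_sub_and_tprod_ne_zero {a : ι → R} (ha : ∀ i, ‖a i‖ < 1)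
    (hsum : Summable (‖a ·‖)) :
    Multipliable (fun i ↦ 1 - a i) ∧ ∏' i, (1 - a i) ≠ 0 := by
  have hsum' : Summable (‖-a ·‖) := by simpa only [norm_neg] using hsum
  have hne : ∀ i, 1 + -a i ≠ 0 := fun i h ↦ by
    simpa [neg_add_eq_zero.mp (by rwa [add_comm] at h)] using ha i
  simpa only [sub_eq_add_neg] using
    And.intro (multipliable_one_add_of_summable hsum') (tprod_one_add_ne_zero_of_summable hne hsum')

end OneSub

section LengthSpectrum

variable {I : Type*} {ℓ : I → ℝ}

theorem tendsto_cofinite_atTop_of_summable_exp_neg_mul (hℓ : ∀ i, 0 ≤ ℓ i) {δ : ℝ}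
    (hsum : Summable fun i ↦ Real.exp (-δ * ℓ i)) : Tendsto ℓ cofinite atTop := by
  have hbot : Tendsto (fun i ↦ -δ * ℓ i) cofinite atBot :=
    Real.tendsto_exp_comp_nhds_zero.mp hsum.tendsto_cofinite_zero
  rcases lt_or_ge 0 δ with hδ | hδ
  · simpa [mul_comm, ← mul_assoc, hδ.ne'] using
      hbot.atBot_mul_const_of_neg (inv_lt_zero.2 (neg_neg_of_pos hδ))
  · -- for `δ ≤ 0` the terms are at least `1`, so `I` is finite
    have : ∀ᶠ i in cofinite, False := (hbot.eventually (eventually_lt_atBot 0)).mono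
      fun i hi ↦ (mul_nonneg (neg_nonneg.2 hδ) (hℓ i)).not_gt hi
    simp [eventually_false_iff_eq_bot.mp this]

theorem summable_exp_neg_mul_of_le (hℓ : ∀ i, 0 ≤ ℓ i) {δ σ : ℝ} (hδσ : δ ≤ σ)
    (hsum : Summable fun i ↦ Real.exp (-δ * ℓ i)) : Summable fun i ↦ Real.exp (-σ * ℓ i) :=
  hsum.of_nonneg_of_le (fun _ ↦ (Real.exp_pos _).le) fun i ↦
    Real.exp_le_exp.2 (by nlinarith [hℓ i])

end LengthSpectrum

theorem summable_pow_mul_pow_mul {I : Type*} {b r : I → ℝ} (hb : ∀ i, 0 ≤ b i)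
    (hr₀ : ∀ i, 0 ≤ r i) (hr₁ : ∀ i, r i < 1) (hsum : Summable b)
    (hr : ∀ᶠ i in cofinite, r i ≤ 1 / 2) :
    Summable fun x : I × ℕ × ℕ ↦ r x.1 ^ x.2.1 * r x.1 ^ x.2.2 * b x.1 := by
  have hgeom (i : I) : Summable fun n : ℕ ↦ ‖r i ^ n‖ := by
    simpa [abs_of_nonneg (hr₀ i)] using summable_geometric_of_lt_one (hr₀ i) (hr₁ i)
  have hfibre (i : I) : HasSum (fun pq : ℕ × ℕ ↦ r i ^ pq.1 * r i ^ pq.2 * b i)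
      ((1 - r i)⁻¹ * (1 - r i)⁻¹ * b i) := by
    have hprod : HasSum (fun pq : ℕ × ℕ ↦ r i ^ pq.1 * r i ^ pq.2)
        ((1 - r i)⁻¹ * (1 - r i)⁻¹) := by
      rw [← tsum_geometric_of_lt_one (hr₀ i) (hr₁ i)]
      exact (summable_mul_of_summable_norm (hgeom i) (hgeom i)).hasSum_iff.2
        (tsum_mul_tsum_of_summable_norm (hgeom i) (hgeom i)).symm
    exact hprod.mul_right (b i)
  rw [summable_prod_of_nonneg fun x ↦ by have := hr₀ x.1; have := hb x.1; positivity]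
  refine ⟨fun i ↦ (hfibre i).summable, ?_⟩
  refine (hsum.mul_left 4).of_norm_bounded_eventually (hr.mono fun i hi ↦ ?_)
  have hpos : 0 < 1 - r i := sub_pos.2 (hr₁ i)
  have hinv : (1 - r i)⁻¹ ≤ 2 := by
    rw [inv_le_comm₀ hpos two_pos]; linarith
  rw [(hfibre i).tsum_eq, Real.norm_of_nonneg (by have := hb i; positivity)]
  calc (1 - r i)⁻¹ * (1 - r i)⁻¹ * b i ≤ 2 * 2 * b i := by
        have := hb i; have := inv_pos.2 hpos; gcongr
    _ = 4 * b i := by ring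

section Norms

open Complex

theorem norm_exp_I_mul_intCast_div_two_mul (k : ℤ) (θ : ℝ) :
    ‖cexp (I * ((k : ℂ) / 2) * θ)‖ = 1 := by
  rw [norm_exp]; simp

theorem norm_exp_neg_mul_ofReal (s : ℂ) (ℓ : ℝ) : ‖cexp (-s * ℓ)‖ = Real.exp (-s.re * ℓ) := by
  rw [norm_exp]; simp

theorem norm_exp_neg_natCast_mul_add_I_mul (n : ℕ) (ℓ θ : ℝ) :
    ‖cexp (-(n : ℂ) * (ℓ + I * θ))‖ = Real.exp (-ℓ) ^ n := by
  rw [norm_exp, ← Real.exp_nat_mul]; simp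

theorem norm_exp_neg_natCast_mul_sub_I_mul (n : ℕ) (ℓ θ : ℝ) :
    ‖cexp (-(n : ℂ) * (ℓ - I * θ))‖ = Real.exp (-ℓ) ^ n := by
  rw [norm_exp, ← Real.exp_nat_mul]; simp

end Norms

theorem statement1_general {I : Type*} (ℓ θ : I → ℝ)
    (hℓ : ∀ i, 0 < ℓ i) (δ : ℝ) (hδ : δ < 2)
    (hsum : Summable fun i => Real.exp (-δ * ℓ i))
    (k : ℤ) (s : ℂ) (hs : 2 < s.re) :
    (Multipliable fun i : I =>
      (1 - Complex.exp (Complex.I * ((k : ℂ) / 2) * (θ i : ℂ))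
        * Complex.exp (-s * (ℓ i : ℂ)))) ∧
    Rz ℓ θ k s ≠ 0 ∧
    (Multipliable fun x : I × ℕ × ℕ =>
      (1 - Complex.exp (Complex.I * ((k : ℂ) / 2) * (θ x.1 : ℂ))
         * Complex.exp (-(x.2.1 : ℂ) * ((ℓ x.1 : ℂ) + Complex.I * (θ x.1 : ℂ)))
         * Complex.exp (-(x.2.2 : ℂ) * ((ℓ x.1 : ℂ) - Complex.I * (θ x.1 : ℂ)))
         * Complex.exp (-s * (ℓ x.1 : ℂ)))) ∧
    Zs ℓ θ k s ≠ 0 := by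
  have hℓ₀ (i : I) : 0 ≤ ℓ i := (hℓ i).le
  have hb : Summable fun i ↦ Real.exp (-s.re * ℓ i) :=
    summable_exp_neg_mul_of_le hℓ₀ (by linarith) hsum
  have hb₁ (i : I) : Real.exp (-s.re * ℓ i) < 1 :=
    Real.exp_lt_one_iff.2 (by nlinarith [hℓ i])
  have hr₁ (i : I) : Real.exp (-ℓ i) < 1 := Real.exp_lt_one_iff.2 (by linarith [hℓ i])
  have hr : ∀ᶠ i in cofinite, Real.exp (-ℓ i) ≤ 1 / 2 :=
    (Real.tendsto_exp_neg_atTop_nhds_zero.comp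
      (tendsto_cofinite_atTop_of_summable_exp_neg_mul hℓ₀ hsum)).eventually
      (ge_mem_nhds (by norm_num))
  rw [Rz, Zs, ← and_assoc]
  refine ⟨multipliable_one_sub_and_tprod_ne_zero ?_ ?_,
    multipliable_one_sub_and_tprod_ne_zero ?_ ?_⟩
  all_goals simp only [norm_mul, norm_exp_I_mul_intCast_div_two_mul, norm_exp_neg_mul_ofReal,
    norm_exp_neg_natCast_mul_add_I_mul, norm_exp_neg_natCast_mul_sub_I_mul, one_mul]
  · exact hb₁
  · exact hb
  · intro x
    have hr₀ : 0 ≤ Real.exp (-ℓ x.1) := (Real.exp_pos _).le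
    calc Real.exp (-ℓ x.1) ^ x.2.1 * Real.exp (-ℓ x.1) ^ x.2.2 * Real.exp (-s.re * ℓ x.1)
        ≤ Real.exp (-s.re * ℓ x.1) :=
          mul_le_of_le_one_left (Real.exp_pos _).le <| mul_le_one₀
            (pow_le_one₀ hr₀ (hr₁ x.1).le) (pow_nonneg hr₀ _) (pow_le_one₀ hr₀ (hr₁ x.1).le)
      _ < 1 := hb₁ x.1
  · exact summable_pow_mul_pow_mul (b := fun i ↦ Real.exp (-s.re * ℓ i))
      (r := fun i ↦ Real.exp (-ℓ i)) (fun _ ↦ (Real.exp_pos _).le) (fun _ ↦ (Real.exp_pos _).le)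
      hr₁ hb hr

/-- for `Re(s) > 2`, the products defining `R(k,s)` and `Z(k,s)` converge
absolutely and are nonzero. -/
theorem statement1 {I : Type*} [Countable I] (ℓ θ : I → ℝ)
    (hℓ : ∀ i, 0 < ℓ i) (δ : ℝ) (hδ : δ < 2)
    (hsum : Summable fun i => Real.exp (-δ * ℓ i))
    (k : ℤ) (s : ℂ) (hs : 2 < s.re) :
    (Multipliable fun i : I =>
      (1 - Complex.exp (Complex.I * ((k : ℂ) / 2) * (θ i : ℂ))
        * Complex.exp (-s * (ℓ i : ℂ)))) ∧
    Rz ℓ θ k s ≠ 0 ∧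
    (Multipliable fun x : I × ℕ × ℕ =>
      (1 - Complex.exp (Complex.I * ((k : ℂ) / 2) * (θ x.1 : ℂ))
         * Complex.exp (-(x.2.1 : ℂ) * ((ℓ x.1 : ℂ) + Complex.I * (θ x.1 : ℂ)))
         * Complex.exp (-(x.2.2 : ℂ) * ((ℓ x.1 : ℂ) - Complex.I * (θ x.1 : ℂ)))
         * Complex.exp (-s * (ℓ x.1 : ℂ)))) ∧
    Zs ℓ θ k s ≠ 0 :=
  statement1_general ℓ θ hℓ δ hδ hsum k s hs
end

section
/- (Factorization of the Ruelle zeta function attached to ρ_m.) Let m ∈ ℕ, and suppose that for every i ∈ I the matrix A i ∈ Matrix (Fin (m+1)) (Fin (m+1)) ℂ is similar to the diagonal matrix whose diagonal entries are exp((m/2 − l)·(ℓ i + i·θ i)) for l = 0, 1, …, m (this is ρ_m(γ_i) for the m-th symmetric power ρ_m of the standard representation of SL(2,ℂ)). Then for every s ∈ ℂ with Re(s) > 2 + m/2, the family over i ∈ I given by det(1 − exp(−s·ℓ i)·(A i)) is multipliable, and ∏_{i ∈ I} det(1 − exp(−s·ℓ i)·(A i)) = ∏_{l=0}^{m} R(m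 − 2l, s − m/2 + l). -/
/-!
Conjugating `A i` to diagonal form gives `det(1 − e^{−sℓ} A) = ∏_l (1 − e^{−sℓ} λ_l)`, and
`e^{−sℓ} e^{(m/2 − l)(ℓ + iθ)} = e^{i((m − 2l)/2)θ} e^{−(s − m/2 + l)ℓ}`, so the `l`-th factor is
the Euler factor of `R(m − 2l, s − m/2 + l)`. Since `Re(s − m/2 + l) > 2 > δ`, each of these
`m + 1` Euler products converges absolutely (its terms are bounded by `e^{−δℓ}`), so the
product over `I` of the finite products is the finite product of the products over `I`.
-/

/-- The factor of `Rz` at a class of length `x` and holonomy angle `t`. -/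
noncomputable def ruelleFactor (x t : ℝ) (k : ℤ) (s : ℂ) : ℂ :=
  1 - Complex.exp (Complex.I * ((k : ℂ) / 2) * (t : ℂ)) * Complex.exp (-s * (x : ℂ))

lemma norm_exp_phase_mul_exp (x t : ℝ) (k : ℤ) (w : ℂ) :
    ‖Complex.exp (Complex.I * ((k : ℂ) / 2) * (t : ℂ)) * Complex.exp (-w * (x : ℂ))‖ =
      Real.exp (-w.re * x) := by
  simp [Complex.norm_exp, Complex.mul_re]

lemma multipliable_ruelleFactor {ι : Type*} (ℓ θ : ι → ℝ) (hℓ : ∀ i, 0 ≤ ℓ i) (δ : ℝ)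
    (hsum : Summable fun i => Real.exp (-δ * ℓ i)) (k : ℤ) {w : ℂ} (hw : δ ≤ w.re) :
    Multipliable fun i => ruelleFactor (ℓ i) (θ i) k w := by
  have hbound : ∀ i, ‖-(Complex.exp (Complex.I * ((k : ℂ) / 2) * (θ i : ℂ)) *
      Complex.exp (-w * (ℓ i : ℂ)))‖ ≤ Real.exp (-δ * ℓ i) := fun i => by
    rw [norm_neg, norm_exp_phase_mul_exp, Real.exp_le_exp]
    nlinarith [hℓ i]
  have hsum' := hsum.of_nonneg_of_le (fun _ => norm_nonneg _) hbound
  exact (multipliable_one_add_of_summable hsum').congr fun _ => (sub_eq_add_neg _ _).symm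

lemma Matrix.det_one_sub_smul_conj_diagonal {n R : Type*} [Fintype n] [DecidableEq n]
    [CommRing R] {P : Matrix n n R} (hP : IsUnit P.det) (d : n → R) (c : R) :
    (1 - c • (P * Matrix.diagonal d * P⁻¹)).det = ∏ l, (1 - c * d l) := by
  have hdiag : Matrix.diagonal (fun l => 1 - c * d l) = 1 - c • Matrix.diagonal d := by
    rw [← Matrix.diagonal_one, ← Matrix.diagonal_smul, ← Matrix.diagonal_sub]
    rfl
  have hconj : 1 - c • (P * Matrix.diagonal d * P⁻¹) =
      P * Matrix.diagonal (fun l => 1 - c * d l) * P⁻¹ := by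
    rw [hdiag, Matrix.mul_sub, Matrix.sub_mul, Matrix.mul_one, Matrix.mul_nonsing_inv _ hP,
      Matrix.mul_smul, Matrix.smul_mul]
  rw [hconj, Matrix.det_conj ((P.isUnit_iff_isUnit_det).2 hP), Matrix.det_diagonal]

lemma exp_mul_exp_symPow_eigenvalue (x t : ℝ) (m l : ℕ) (s : ℂ) :
    Complex.exp (-s * (x : ℂ)) *
        Complex.exp (((m : ℂ) / 2 - (l : ℂ)) * ((x : ℂ) + Complex.I * (t : ℂ))) =
      Complex.exp (Complex.I * ((((m : ℤ) - 2 * (l : ℤ) : ℤ) : ℂ) / 2) * (t : ℂ)) *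
        Complex.exp (-(s - (m : ℂ) / 2 + (l : ℂ)) * (x : ℂ)) := by
  rw [← Complex.exp_add, ← Complex.exp_add]
  congr 1
  push_cast
  ring

lemma det_one_sub_smul_eq_prod_ruelleFactor (x t : ℝ) {m : ℕ}
    {A : Matrix (Fin (m + 1)) (Fin (m + 1)) ℂ}
    (hA : ∃ P : Matrix (Fin (m + 1)) (Fin (m + 1)) ℂ, IsUnit P.det ∧
      A = P * Matrix.diagonal (fun l : Fin (m + 1) =>
        Complex.exp (((m : ℂ) / 2 - ((l : ℕ) : ℂ)) * ((x : ℂ) + Complex.I * (t : ℂ)))) * P⁻¹)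
    (s : ℂ) :
    (1 - Complex.exp (-s * (x : ℂ)) • A).det =
      ∏ l ∈ Finset.range (m + 1),
        ruelleFactor x t ((m : ℤ) - 2 * (l : ℤ)) (s - (m : ℂ) / 2 + (l : ℂ)) := by
  obtain ⟨P, hP, rfl⟩ := hA
  rw [Matrix.det_one_sub_smul_conj_diagonal hP, Fin.prod_univ_eq_prod_range (fun l : ℕ =>
    1 - Complex.exp (-s * (x : ℂ)) *
      Complex.exp (((m : ℂ) / 2 - (l : ℂ)) * ((x : ℂ) + Complex.I * (t : ℂ))))]
  refine Finset.prod_congr rfl fun l _ => ?_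
  rw [ruelleFactor, exp_mul_exp_symPow_eigenvalue]

theorem statement2_general {I : Type*} (ℓ θ : I → ℝ)
    (hℓ : ∀ i, 0 < ℓ i) (δ : ℝ) (hδ : δ < 2)
    (hsum : Summable fun i => Real.exp (-δ * ℓ i))
    (m : ℕ) (A : I → Matrix (Fin (m + 1)) (Fin (m + 1)) ℂ)
    (hA : ∀ i : I, ∃ P : Matrix (Fin (m + 1)) (Fin (m + 1)) ℂ, IsUnit P.det ∧
      A i = P * Matrix.diagonal (fun l : Fin (m + 1) =>
        Complex.exp (((m : ℂ) / 2 - ((l : ℕ) : ℂ)) * ((ℓ i : ℂ) + Complex.I * (θ i : ℂ)))) * P⁻¹)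
    (s : ℂ) (hs : 2 + (m : ℝ) / 2 < s.re) :
    (Multipliable fun i : I =>
      Matrix.det (1 - Complex.exp (-s * (ℓ i : ℂ)) • A i)) ∧
    (∏' i : I, Matrix.det (1 - Complex.exp (-s * (ℓ i : ℂ)) • A i)) =
      ∏ l ∈ Finset.range (m + 1),
        Rz ℓ θ ((m : ℤ) - 2 * (l : ℤ)) (s - (m : ℂ) / 2 + (l : ℂ)) := by
  have hre : ∀ l : ℕ, δ ≤ (s - (m : ℂ) / 2 + (l : ℂ)).re := fun l => by
    simp only [Complex.add_re, Complex.sub_re, Complex.div_ofNat_re, Complex.natCast_re]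
    linarith [(Nat.cast_nonneg l : (0 : ℝ) ≤ l)]
  have hmult : ∀ l ∈ Finset.range (m + 1), Multipliable fun i =>
      ruelleFactor (ℓ i) (θ i) ((m : ℤ) - 2 * (l : ℤ)) (s - (m : ℂ) / 2 + (l : ℂ)) :=
    fun l _ => multipliable_ruelleFactor ℓ θ (fun i => (hℓ i).le) δ hsum _ (hre l)
  simp only [fun i => det_one_sub_smul_eq_prod_ruelleFactor (ℓ i) (θ i) (hA i) s]
  exact ⟨multipliable_prod hmult, Multipliable.tprod_finsetProd hmult⟩

/-- factorization of the Ruelle zeta function attached to `ρ_m`. -/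
theorem statement2 {I : Type*} [Countable I] (ℓ θ : I → ℝ)
    (hℓ : ∀ i, 0 < ℓ i) (δ : ℝ) (hδ : δ < 2)
    (hsum : Summable fun i => Real.exp (-δ * ℓ i))
    (m : ℕ) (A : I → Matrix (Fin (m + 1)) (Fin (m + 1)) ℂ)
    (hA : ∀ i : I, ∃ P : Matrix (Fin (m + 1)) (Fin (m + 1)) ℂ, IsUnit P.det ∧
      A i = P * Matrix.diagonal (fun l : Fin (m + 1) =>
        Complex.exp (((m : ℂ) / 2 - ((l : ℕ) : ℂ)) * ((ℓ i : ℂ) + Complex.I * (θ i : ℂ)))) * P⁻¹)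
    (s : ℂ) (hs : 2 + (m : ℝ) / 2 < s.re) :
    (Multipliable fun i : I =>
      Matrix.det (1 - Complex.exp (-s * (ℓ i : ℂ)) • A i)) ∧
    (∏' i : I, Matrix.det (1 - Complex.exp (-s * (ℓ i : ℂ)) • A i)) =
      ∏ l ∈ Finset.range (m + 1),
        Rz ℓ θ ((m : ℤ) - 2 * (l : ℤ)) (s - (m : ℂ) / 2 + (l : ℂ)) :=
  statement2_general ℓ θ hℓ δ hδ hsum m A hA s hs
end

section
/- Let m ∈ ℕ and s ∈ ℂ with Re(s) > 2 + m/2. Then the family over (i, p) ∈ I × ℕ given by (1 − exp((m/2)·(ℓ i + i·θ i))·exp(−p(ℓ i + i·θ i))·exp(−s·ℓ i)) is multipliable, and Z(m, s − m/2) / Z(m + 2, s − m/2 + 1) = ∏_{i ∈ I} ∏_{p ≥ 0} (1 − exp((m/2)·(ℓ i + i·θ i))·exp(−p(ℓ i + i·θ i))·exp(−s·ℓ i)), where the denominator Z(m + 2, s − m/2 + 1) is nonzero. -/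
open Filter

theorem HasProd.zero_mul_prod {α M : Type*} [CommMonoid M] [TopologicalSpace M] [ContinuousMul M]
    {f : α × ℕ → M} {m₀ m : M} (h₀ : HasProd (fun a ↦ f (a, 0)) m₀)
    (h : HasProd (fun x : α × ℕ ↦ f (x.1, x.2 + 1)) m) : HasProd f (m₀ * m) := by
  have hinj₀ : (fun a : α ↦ (a, 0)).Injective := fun _ _ h ↦ (Prod.ext_iff.1 h).1
  have hinj : (fun x : α × ℕ ↦ (x.1, x.2 + 1)).Injective :=
    fun _ _ h ↦ Prod.ext (Prod.ext_iff.1 h).1 (add_left_injective 1 (Prod.ext_iff.1 h).2)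
  refine (hinj₀.hasProd_range_iff.2 h₀).mul_isCompl ?_ (hinj.hasProd_range_iff.2 h)
  rw [isCompl_iff, disjoint_iff, codisjoint_iff]
  constructor <;> ext ⟨a, n⟩ <;> cases n <;> simp

section MultipliableOneSub

variable {ι R : Type*} [NormedCommRing R] [NormOneClass R] [CompleteSpace R] {u : ι → R}

theorem multipliable_one_sub_of_summable_norm (hu : Summable fun i ↦ ‖u i‖) :
    Multipliable fun i ↦ 1 - u i := by
  simpa [sub_eq_add_neg] using
    multipliable_one_add_of_summable (f := fun i ↦ -u i) (by simpa only [norm_neg] using hu)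

theorem tprod_one_sub_ne_zero_of_summable_norm [NormMulClass R] (hu : Summable fun i ↦ ‖u i‖)
    (hne : ∀ i, u i ≠ 1) : ∏' i, (1 - u i) ≠ 0 := by
  simpa [sub_eq_add_neg] using tprod_one_add_ne_zero_of_summable (f := fun i ↦ -u i)
    (fun i ↦ by rw [← sub_eq_add_neg, sub_ne_zero]; exact (hne i).symm)
    (by simpa only [norm_neg] using hu)

end MultipliableOneSub

theorem exists_pos_forall_le_of_eventually_le {ι : Type*} {ℓ : ι → ℝ} (hℓ : ∀ i, 0 < ℓ i) {a : ℝ}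
    (ha : 0 < a) (h : ∀ᶠ i in cofinite, a ≤ ℓ i) : ∃ c > 0, ∀ i, c ≤ ℓ i := by
  classical
  set t := insert a (h.toFinset.image ℓ)
  refine ⟨t.min' (Finset.insert_nonempty _ _), ?_, fun i ↦ ?_⟩
  · rw [gt_iff_lt, Finset.lt_min'_iff]
    simp only [t, Finset.mem_insert, Finset.mem_image]
    rintro _ (rfl | ⟨i, -, rfl⟩)
    exacts [ha, hℓ i]
  by_cases hi : a ≤ ℓ i
  · exact (t.min'_le a (Finset.mem_insert_self _ _)).trans hi
  · exact t.min'_le _ <| Finset.mem_insert_of_mem <|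
      Finset.mem_image_of_mem _ ((Set.Finite.mem_toFinset _).2 hi)

theorem eventually_one_le_of_summable_exp {ι : Type*} {ℓ : ι → ℝ} (hℓ : ∀ i, 0 < ℓ i) {δ : ℝ}
    (hsum : Summable fun i ↦ Real.exp (-δ * ℓ i)) : ∀ᶠ i in cofinite, 1 ≤ ℓ i := by
  have h : Tendsto (fun i ↦ -δ * ℓ i) cofinite atBot :=
    Real.tendsto_exp_comp_nhds_zero.1 hsum.tendsto_cofinite_zero
  filter_upwards [h.eventually_lt_atBot (min 0 (-δ))] with i hi
  have hδ : 0 < δ := by nlinarith [hℓ i, min_le_left 0 (-δ)]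
  nlinarith [min_le_right 0 (-δ)]

theorem summable_exp_neg_mul_of_summable {ι : Type*} {ℓ : ι → ℝ} (hℓ : ∀ i, 0 < ℓ i) {δ r : ℝ}
    (hsum : Summable fun i ↦ Real.exp (-δ * ℓ i)) (hδr : δ ≤ r) :
    Summable fun x : ι × ℕ × ℕ ↦ Real.exp (-(x.2.1 + x.2.2 + r) * ℓ x.1) := by
  obtain ⟨c, hc, hcℓ⟩ :=
    exists_pos_forall_le_of_eventually_le hℓ one_pos (eventually_one_le_of_summable_exp hℓ hsum)
  have hgeom : Summable fun n : ℕ ↦ Real.exp (-c) ^ n :=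
    summable_geometric_of_lt_one (Real.exp_nonneg _) (Real.exp_lt_one_iff.2 (neg_neg_of_pos hc))
  refine Summable.of_nonneg_of_le (fun _ ↦ Real.exp_nonneg _) (fun x ↦ ?_)
    (hsum.mul_of_nonneg (hgeom.mul_of_nonneg hgeom (fun _ ↦ by positivity) fun _ ↦ by positivity)
      (fun _ ↦ Real.exp_nonneg _) fun _ ↦ by positivity)
  obtain ⟨i, p, q⟩ := x
  simp only [← Real.exp_nat_mul, ← Real.exp_add]
  gcongr
  nlinarith [hcℓ i, hℓ i, (p.cast_nonneg : (0 : ℝ) ≤ p), (q.cast_nonneg : (0 : ℝ) ≤ q)]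

section SelbergFactor

variable {I : Type*} (ℓ θ : I → ℝ)

noncomputable def zsTerm (k : ℤ) (s : ℂ) (x : I × ℕ × ℕ) : ℂ :=
  Complex.exp (Complex.I * ((k : ℂ) / 2) * (θ x.1 : ℂ))
    * Complex.exp (-(x.2.1 : ℂ) * ((ℓ x.1 : ℂ) + Complex.I * (θ x.1 : ℂ)))
    * Complex.exp (-(x.2.2 : ℂ) * ((ℓ x.1 : ℂ) - Complex.I * (θ x.1 : ℂ)))
    * Complex.exp (-s * (ℓ x.1 : ℂ))

theorem Zs_eq_tprod (k : ℤ) (s : ℂ) : Zs ℓ θ k s = ∏' x, (1 - zsTerm ℓ θ k s x) := rfl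

theorem norm_zsTerm (k : ℤ) (s : ℂ) (x : I × ℕ × ℕ) :
    ‖zsTerm ℓ θ k s x‖ = Real.exp (-(x.2.1 + x.2.2 + s.re) * ℓ x.1) := by
  simp [zsTerm, Complex.norm_exp, ← Real.exp_add, add_mul, Complex.mul_re, add_comm]

theorem zsTerm_add_two (k : ℤ) (s : ℂ) (i : I) (p q : ℕ) :
    zsTerm ℓ θ (k + 2) (s + 1) (i, p, q) = zsTerm ℓ θ k s (i, p, q + 1) := by
  simp only [zsTerm, ← Complex.exp_add]
  congr 1
  push_cast
  ring

theorem zsTerm_zero (k : ℤ) (s : ℂ) (i : I) (p : ℕ) :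
    zsTerm ℓ θ k (s - k / 2) (i, p, 0) =
      Complex.exp ((k : ℂ) / 2 * ((ℓ i : ℂ) + Complex.I * (θ i : ℂ)))
        * Complex.exp (-(p : ℂ) * ((ℓ i : ℂ) + Complex.I * (θ i : ℂ)))
        * Complex.exp (-s * (ℓ i : ℂ)) := by
  simp only [zsTerm, ← Complex.exp_add]
  congr 1
  push_cast
  ring

variable {ℓ}

theorem norm_zsTerm_lt_one (hℓ : ∀ i, 0 < ℓ i) (k : ℤ) {s : ℂ} (hs : 0 < s.re) (x : I × ℕ × ℕ) :
    ‖zsTerm ℓ θ k s x‖ < 1 := by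
  rw [norm_zsTerm, Real.exp_lt_one_iff, neg_mul, neg_lt_zero]
  exact mul_pos (by positivity) (hℓ _)

theorem summable_norm_zsTerm (hℓ : ∀ i, 0 < ℓ i) {δ : ℝ}
    (hsum : Summable fun i ↦ Real.exp (-δ * ℓ i)) (k : ℤ) {s : ℂ} (hs : δ ≤ s.re) :
    Summable fun x ↦ ‖zsTerm ℓ θ k s x‖ := by
  simpa only [norm_zsTerm] using summable_exp_neg_mul_of_summable hℓ hsum hs

theorem Zs_ne_zero (hℓ : ∀ i, 0 < ℓ i) {δ : ℝ} (hsum : Summable fun i ↦ Real.exp (-δ * ℓ i))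
    (k : ℤ) {s : ℂ} (hδs : δ ≤ s.re) (hs : 0 < s.re) : Zs ℓ θ k s ≠ 0 := by
  rw [Zs_eq_tprod]
  refine tprod_one_sub_ne_zero_of_summable_norm (summable_norm_zsTerm θ hℓ hsum k hδs) fun x h ↦ ?_
  simpa [h] using norm_zsTerm_lt_one θ hℓ k hs x

theorem summable_norm_zsTerm_zero (hℓ : ∀ i, 0 < ℓ i) {δ : ℝ}
    (hsum : Summable fun i ↦ Real.exp (-δ * ℓ i)) (k : ℤ) {s : ℂ} (hs : δ ≤ s.re) :
    Summable fun y : I × ℕ ↦ ‖zsTerm ℓ θ k s (y.1, y.2, 0)‖ :=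
  (summable_norm_zsTerm θ hℓ hsum k hs).comp_injective fun _ _ h ↦ by simpa [Prod.ext_iff] using h

theorem Zs_eq_tprod_mul_Zs (hℓ : ∀ i, 0 < ℓ i) {δ : ℝ}
    (hsum : Summable fun i ↦ Real.exp (-δ * ℓ i)) (k : ℤ) {s : ℂ} (hs : δ ≤ s.re) :
    Zs ℓ θ k s = (∏' y : I × ℕ, (1 - zsTerm ℓ θ k s (y.1, y.2, 0))) * Zs ℓ θ (k + 2) (s + 1) := by
  have h₀ := (multipliable_one_sub_of_summable_norm
    (summable_norm_zsTerm_zero θ hℓ hsum k hs)).hasProd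
  have h₂ : HasProd (fun z : (I × ℕ) × ℕ ↦ 1 - zsTerm ℓ θ k s (z.1.1, z.1.2, z.2 + 1))
      (Zs ℓ θ (k + 2) (s + 1)) := by
    have hs₁ : δ ≤ (s + 1).re := by rw [Complex.add_re, Complex.one_re]; linarith
    have hZ := (multipliable_one_sub_of_summable_norm
      (summable_norm_zsTerm θ hℓ hsum (k + 2) hs₁)).hasProd
    rw [Zs_eq_tprod]
    simpa only [Function.comp_def, Equiv.prodAssoc_apply, zsTerm_add_two] using
      (Equiv.prodAssoc I ℕ ℕ).hasProd_iff.2 hZ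
  have hsplit : HasProd (fun x ↦ 1 - zsTerm ℓ θ k s x) _ :=
    (Equiv.prodAssoc I ℕ ℕ).hasProd_iff.1 <| HasProd.zero_mul_prod
      (f := fun z : (I × ℕ) × ℕ ↦ 1 - zsTerm ℓ θ k s (z.1.1, z.1.2, z.2)) h₀ h₂
  rw [Zs_eq_tprod ℓ θ k s, hsplit.tprod_eq]

end SelbergFactor

theorem statement3_general {I : Type*} (ℓ θ : I → ℝ)
    (hℓ : ∀ i, 0 < ℓ i) (δ : ℝ) (hδ : δ < 2)
    (hsum : Summable fun i => Real.exp (-δ * ℓ i))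
    (m : ℕ) (s : ℂ) (hs : 2 + (m : ℝ) / 2 < s.re) :
    (Multipliable fun x : I × ℕ =>
      (1 - Complex.exp ((m : ℂ) / 2 * ((ℓ x.1 : ℂ) + Complex.I * (θ x.1 : ℂ)))
         * Complex.exp (-(x.2 : ℂ) * ((ℓ x.1 : ℂ) + Complex.I * (θ x.1 : ℂ)))
         * Complex.exp (-s * (ℓ x.1 : ℂ)))) ∧
    Zs ℓ θ ((m : ℤ) + 2) (s - (m : ℂ) / 2 + 1) ≠ 0 ∧
    Zs ℓ θ (m : ℤ) (s - (m : ℂ) / 2) / Zs ℓ θ ((m : ℤ) + 2) (s - (m : ℂ) / 2 + 1) =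
      ∏' x : I × ℕ,
        (1 - Complex.exp ((m : ℂ) / 2 * ((ℓ x.1 : ℂ) + Complex.I * (θ x.1 : ℂ)))
           * Complex.exp (-(x.2 : ℂ) * ((ℓ x.1 : ℂ) + Complex.I * (θ x.1 : ℂ)))
           * Complex.exp (-s * (ℓ x.1 : ℂ))) := by
  have hre : 2 < (s - (m : ℂ) / 2).re := by
    simp only [Complex.sub_re, Complex.div_ofNat_re, Complex.natCast_re]; linarith
  have hre₁ : 2 < (s - (m : ℂ) / 2 + 1).re := by rw [Complex.add_re, Complex.one_re]; linarith
  have hZ : Zs ℓ θ (m + 2) (s - (m : ℂ) / 2 + 1) ≠ 0 :=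
    Zs_ne_zero θ hℓ hsum _ (by linarith) (by linarith)
  have hfactor :
      (fun y : I × ℕ ↦ 1 - zsTerm ℓ θ m (s - (m : ℂ) / 2) (y.1, y.2, 0)) = fun x : I × ℕ ↦
      1 - Complex.exp ((m : ℂ) / 2 * ((ℓ x.1 : ℂ) + Complex.I * (θ x.1 : ℂ)))
        * Complex.exp (-(x.2 : ℂ) * ((ℓ x.1 : ℂ) + Complex.I * (θ x.1 : ℂ)))
        * Complex.exp (-s * (ℓ x.1 : ℂ)) := by
    ext y
    have := zsTerm_zero ℓ θ m s y.1 y.2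
    push_cast at this
    rw [this]
  refine ⟨hfactor ▸ multipliable_one_sub_of_summable_norm
    (summable_norm_zsTerm_zero θ hℓ hsum m (hδ.le.trans hre.le)), hZ, ?_⟩
  rw [Zs_eq_tprod_mul_Zs θ hℓ hsum m (hδ.le.trans hre.le), mul_div_cancel_right₀ _ hZ, hfactor]

/-- `Z(m, s − m/2) / Z(m+2, s − m/2 + 1)` as a convergent product over
`(i, p) ∈ I × ℕ`. -/
theorem statement3 {I : Type*} [Countable I] (ℓ θ : I → ℝ)
    (hℓ : ∀ i, 0 < ℓ i) (δ : ℝ) (hδ : δ < 2)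
    (hsum : Summable fun i => Real.exp (-δ * ℓ i))
    (m : ℕ) (s : ℂ) (hs : 2 + (m : ℝ) / 2 < s.re) :
    (Multipliable fun x : I × ℕ =>
      (1 - Complex.exp ((m : ℂ) / 2 * ((ℓ x.1 : ℂ) + Complex.I * (θ x.1 : ℂ)))
         * Complex.exp (-(x.2 : ℂ) * ((ℓ x.1 : ℂ) + Complex.I * (θ x.1 : ℂ)))
         * Complex.exp (-s * (ℓ x.1 : ℂ)))) ∧
    Zs ℓ θ ((m : ℤ) + 2) (s - (m : ℂ) / 2 + 1) ≠ 0 ∧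
    Zs ℓ θ (m : ℤ) (s - (m : ℂ) / 2) / Zs ℓ θ ((m : ℤ) + 2) (s - (m : ℂ) / 2 + 1) =
      ∏' x : I × ℕ,
        (1 - Complex.exp ((m : ℂ) / 2 * ((ℓ x.1 : ℂ) + Complex.I * (θ x.1 : ℂ)))
           * Complex.exp (-(x.2 : ℂ) * ((ℓ x.1 : ℂ) + Complex.I * (θ x.1 : ℂ)))
           * Complex.exp (-s * (ℓ x.1 : ℂ))) :=
  statement3_general ℓ θ hℓ δ hδ hsum m s hs
end

section
/- Let m ∈ ℕ and s ∈ ℂ with Re(s) > 2. Then every factor (1 − exp(−(m/2)·(ℓ i + i·θ i))·exp(−p(ℓ i + i·θ i))·exp(−s·ℓ i)) with i ∈ I and p ≥ 1 is nonzero, the family over (i, p) ∈ I × {p ∈ ℕ : p ≥ 1} of the reciprocals (1 − exp(−(m/2)·(ℓ i + i·θ i))·exp(−p(ℓ i + i·θ i))·exp(−s·ℓ i))⁻¹ is multipliable, and Z(−m, s + m/2 + 2) / Z(−(m + 2), s + m/2 + 1) = ∏_{i ∈ I} ∏_{p ≥ 1} (1 − exp(−(m/2)·(ℓ i + i·θ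 i))·exp(−p(ℓ i + i·θ i))·exp(−s·ℓ i))⁻¹, where the denominator Z(−(m + 2), s + m/2 + 1) is nonzero. -/
open Filter

section OneSubProducts

variable {ι R : Type*} [NormedCommRing R] [NormOneClass R] [CompleteSpace R]

theorem multipliable_one_sub_of_summable {f : ι → R} (hf : Summable (‖f ·‖)) :
    Multipliable fun i => 1 - f i := by
  simpa [sub_eq_add_neg] using
    multipliable_one_add_of_summable (f := fun i => -f i) (by simpa using hf)

theorem tprod_one_sub_ne_zero_of_summable [NormMulClass R] {f : ι → R} (hf1 : ∀ i, f i ≠ 1)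
    (hf : Summable (‖f ·‖)) : ∏' i, (1 - f i) ≠ 0 := by
  simpa [sub_eq_add_neg] using
    tprod_one_add_ne_zero_of_summable (f := fun i => -f i)
      (fun i => by simpa [← sub_eq_add_neg, sub_eq_zero] using (hf1 i).symm) (by simpa using hf)

theorem tprod_one_sub_eq_mul_tprod_succ {κ : Type*} {f : κ × ℕ → R} (hf : Summable (‖f ·‖)) :
    ∏' x, (1 - f x) = (∏' k, (1 - f (k, 0))) * ∏' x : κ × ℕ, (1 - f (x.1, x.2 + 1)) := by
  have hzero : Function.Injective fun k : κ => (k, 0) := fun _ _ h => (Prod.ext_iff.1 h).1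
  have hsucc : Function.Injective fun x : κ × ℕ => (x.1, x.2 + 1) := by
    rintro ⟨_, _⟩ ⟨_, _⟩ h
    simp_all
  have hcompl : (Set.range fun k : κ => (k, 0))ᶜ = Set.range fun x : κ × ℕ => (x.1, x.2 + 1) := by
    ext ⟨k, n⟩
    cases n <;> simp
  have hmul (s : Set (κ × ℕ)) : Multipliable fun x : s => 1 - f x :=
    multipliable_one_sub_of_summable (f := fun x : s => f x) (hf.subtype s)
  have hsplit := Multipliable.tprod_mul_tprod_compl (f := fun x => 1 - f x)
    (s := Set.range fun k : κ => (k, 0)) (hmul _) (hmul _)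
  rw [hcompl, tprod_range (fun x => 1 - f x) hzero, tprod_range (fun x => 1 - f x) hsucc] at hsplit
  exact hsplit.symm

end OneSubProducts

theorem hasProd_inv_one_sub_slice_zero {κ K : Type*} [NormedField K] [CompleteSpace K]
    {f : κ × ℕ → K} (hf1 : ∀ x, f x ≠ 1) (hf : Summable (‖f ·‖)) :
    HasProd (fun k => (1 - f (k, 0))⁻¹)
      ((∏' x : κ × ℕ, (1 - f (x.1, x.2 + 1))) / ∏' x, (1 - f x)) := by
  have hzero : Function.Injective fun k : κ => (k, 0) := fun _ _ h => (Prod.ext_iff.1 h).1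
  have hsucc : Function.Injective fun x : κ × ℕ => (x.1, x.2 + 1) := by
    rintro ⟨_, _⟩ ⟨_, _⟩ h
    simp_all
  have hzero_ne : ∏' k, (1 - f (k, 0)) ≠ 0 :=
    tprod_one_sub_ne_zero_of_summable (fun _ => hf1 _) (hf.comp_injective hzero)
  have hsucc_ne : ∏' x : κ × ℕ, (1 - f (x.1, x.2 + 1)) ≠ 0 :=
    tprod_one_sub_ne_zero_of_summable (fun _ => hf1 _) (hf.comp_injective hsucc)
  rw [tprod_one_sub_eq_mul_tprod_succ hf, div_mul_cancel_right₀ hsucc_ne]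
  exact (multipliable_one_sub_of_summable (hf.comp_injective hzero)).hasProd.inv₀ hzero_ne

theorem exists_pos_forall_le_of_summable_exp {I : Type*} {ℓ : I → ℝ} (hℓ : ∀ i, 0 < ℓ i) {a : ℝ}
    (ha : 0 < a) (hsum : Summable fun i => Real.exp (-a * ℓ i)) : ∃ c > 0, ∀ i, c ≤ ℓ i := by
  cases isEmpty_or_nonempty I with
  | inl _ => exact ⟨1, one_pos, isEmptyElim⟩
  | inr _ =>
    have htendsto : Tendsto (fun i => -a * ℓ i) cofinite atBot :=
      Real.tendsto_exp_comp_nhds_zero.1 hsum.tendsto_cofinite_zero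
    obtain ⟨i₀, hi₀⟩ := htendsto.exists_forall_ge
    exact ⟨ℓ i₀, hℓ i₀, fun i => le_of_neg_le_neg (by nlinarith [hi₀ i])⟩

section Selberg

variable {I : Type*} (ℓ θ : I → ℝ) (m : ℕ) (s : ℂ)

noncomputable def selbergTerm (x : I × ℕ × ℕ) : ℂ :=
  Complex.exp (-((m : ℂ) / 2) * ((ℓ x.1 : ℂ) + Complex.I * (θ x.1 : ℂ))) *
    Complex.exp (-(x.2.1 : ℂ) * ((ℓ x.1 : ℂ) + Complex.I * (θ x.1 : ℂ))) *
    Complex.exp (-(x.2.2 : ℂ) * ((ℓ x.1 : ℂ) - Complex.I * (θ x.1 : ℂ))) *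
    Complex.exp (-s * (ℓ x.1 : ℂ))

theorem Zs_neg_eq_tprod_selbergTerm :
    Zs ℓ θ (-(m : ℤ)) (s + (m : ℂ) / 2 + 2) =
      ∏' x : I × ℕ × ℕ, (1 - selbergTerm ℓ θ m s (x.1, x.2.1 + 1, x.2.2 + 1)) := by
  refine tprod_congr fun x => ?_
  simp only [selbergTerm, ← Complex.exp_add]
  congr 2
  push_cast
  ring

theorem Zs_neg_sub_two_eq_tprod_selbergTerm :
    Zs ℓ θ (-((m : ℤ) + 2)) (s + (m : ℂ) / 2 + 1) =
      ∏' x : I × ℕ × ℕ, (1 - selbergTerm ℓ θ m s (x.1, x.2.1 + 1, x.2.2)) := by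
  refine tprod_congr fun x => ?_
  simp only [selbergTerm, ← Complex.exp_add]
  congr 2
  push_cast
  ring

theorem norm_selbergTerm (x : I × ℕ × ℕ) :
    ‖selbergTerm ℓ θ m s x‖ = Real.exp (-((m : ℝ) / 2 + x.2.1 + x.2.2 + s.re) * ℓ x.1) := by
  simp only [selbergTerm, norm_mul, Complex.norm_exp, ← Real.exp_add]
  congr 1
  simp only [neg_mul, Complex.neg_re, Complex.mul_re, Complex.div_ofNat_re, Complex.natCast_re,
    Complex.add_re, Complex.ofReal_re, Complex.I_re, zero_mul, Complex.I_im, Complex.ofReal_im,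
    mul_zero, sub_self, add_zero, Complex.div_ofNat_im, Complex.natCast_im, zero_div,
    Complex.add_im, Complex.mul_im, one_mul, zero_add, sub_zero, Complex.sub_re, Complex.sub_im,
    zero_sub, mul_neg, neg_zero, neg_add_rev]
  ring

theorem selbergTerm_ne_one (hs : 0 < s.re) {x : I × ℕ × ℕ} (hx : 0 < ℓ x.1) :
    selbergTerm ℓ θ m s x ≠ 1 := by
  have hlt : ‖selbergTerm ℓ θ m s x‖ < 1 := by
    rw [norm_selbergTerm, Real.exp_lt_one_iff, neg_mul, neg_neg_iff_pos]
    positivity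
  rintro h
  simp [h] at hlt

theorem summable_norm_selbergTerm (hℓ : ∀ i, 0 < ℓ i) {δ : ℝ} (hδ : δ ≤ s.re)
    (hsum : Summable fun i => Real.exp (-δ * ℓ i)) (hs : 0 < s.re) :
    Summable (‖selbergTerm ℓ θ m s ·‖) := by
  have hsum_s : Summable fun i => Real.exp (-s.re * ℓ i) :=
    hsum.of_nonneg_of_le (fun _ => (Real.exp_pos _).le)
      fun i => Real.exp_le_exp.2 (by nlinarith [hℓ i])
  obtain ⟨c, hc, hcℓ⟩ := exists_pos_forall_le_of_summable_exp hℓ hs hsum_s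
  have hgeom : Summable fun n : ℕ => Real.exp (-c) ^ n :=
    summable_geometric_of_lt_one (Real.exp_pos _).le (Real.exp_lt_one_iff.2 (neg_lt_zero.2 hc))
  have hdom : Summable fun x : I × ℕ × ℕ =>
      Real.exp (-s.re * ℓ x.1) * (Real.exp (-c) ^ x.2.1 * Real.exp (-c) ^ x.2.2) :=
    hsum_s.mul_of_nonneg (hgeom.mul_of_nonneg hgeom (fun _ => by positivity) fun _ => by positivity)
      (fun _ => by positivity) fun _ => by positivity
  refine hdom.of_nonneg_of_le (fun _ => norm_nonneg _) fun ⟨i, p, q⟩ => ?_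
  rw [norm_selbergTerm, ← Real.exp_nat_mul, ← Real.exp_nat_mul, ← Real.exp_add, ← Real.exp_add]
  refine Real.exp_le_exp.2 ?_
  nlinarith [hℓ i, hcℓ i, m.cast_nonneg (α := ℝ), p.cast_nonneg (α := ℝ), q.cast_nonneg (α := ℝ)]

variable {ℓ θ m s} (hℓ : ∀ i, 0 < ℓ i) {δ : ℝ} (hδ : δ ≤ s.re)
  (hsum : Summable fun i => Real.exp (-δ * ℓ i)) (hs : 0 < s.re)
include hℓ hδ hsum hs

theorem Zs_neg_sub_two_ne_zero : Zs ℓ θ (-((m : ℤ) + 2)) (s + (m : ℂ) / 2 + 1) ≠ 0 := by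
  have hinj : Function.Injective fun x : I × ℕ × ℕ => (x.1, x.2.1 + 1, x.2.2) := by
    rintro ⟨_, _, _⟩ ⟨_, _, _⟩ h
    simp_all
  rw [Zs_neg_sub_two_eq_tprod_selbergTerm]
  exact tprod_one_sub_ne_zero_of_summable (fun _ => selbergTerm_ne_one ℓ θ m s hs (hℓ _))
    ((summable_norm_selbergTerm ℓ θ m s hℓ hδ hsum hs).comp_injective hinj)

theorem hasProd_inv_one_sub_selbergTerm :
    HasProd (fun y : I × {p : ℕ // 1 ≤ p} => (1 - selbergTerm ℓ θ m s (y.1, y.2, 0))⁻¹)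
      (Zs ℓ θ (-(m : ℤ)) (s + (m : ℂ) / 2 + 2) /
        Zs ℓ θ (-((m : ℤ) + 2)) (s + (m : ℂ) / 2 + 1)) := by
  let e : I × ℕ × ℕ ≃ (I × {p : ℕ // 1 ≤ p}) × ℕ :=
    { toFun x := ((x.1, ⟨x.2.1 + 1, Nat.le_add_left 1 _⟩), x.2.2)
      invFun y := (y.1.1, y.1.2 - 1, y.2)
      left_inv x := by simp
      right_inv := by
        rintro ⟨⟨i, p, hp⟩, q⟩
        simp only [Prod.mk.injEq, Subtype.mk.injEq, true_and, and_true]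
        omega }
  let f (y : (I × {p : ℕ // 1 ≤ p}) × ℕ) : ℂ := selbergTerm ℓ θ m s (y.1.1, y.1.2, y.2)
  have hinj :
      Function.Injective fun y : (I × {p : ℕ // 1 ≤ p}) × ℕ => (y.1.1, (y.1.2 : ℕ), y.2) := by
    rintro ⟨⟨_, _⟩, _⟩ ⟨⟨_, _⟩, _⟩ h
    simp_all [Subtype.ext_iff]
  have hf := hasProd_inv_one_sub_slice_zero (f := f)
    (fun _ => selbergTerm_ne_one ℓ θ m s hs (hℓ _))
    ((summable_norm_selbergTerm ℓ θ m s hℓ hδ hsum hs).comp_injective hinj)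
  rw [← e.tprod_eq (fun y => 1 - f (y.1, y.2 + 1)), ← e.tprod_eq (fun y => 1 - f y)] at hf
  rw [Zs_neg_eq_tprod_selbergTerm, Zs_neg_sub_two_eq_tprod_selbergTerm]
  exact hf

end Selberg

theorem statement4_general {I : Type*} (ℓ θ : I → ℝ)
    (hℓ : ∀ i, 0 < ℓ i) (δ : ℝ) (hδ : δ < 2)
    (hsum : Summable fun i => Real.exp (-δ * ℓ i))
    (m : ℕ) (s : ℂ) (hs : 2 < s.re) :
    (∀ (i : I) (p : ℕ), 1 ≤ p →
      (1 - Complex.exp (-((m : ℂ) / 2) * ((ℓ i : ℂ) + Complex.I * (θ i : ℂ)))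
         * Complex.exp (-(p : ℂ) * ((ℓ i : ℂ) + Complex.I * (θ i : ℂ)))
         * Complex.exp (-s * (ℓ i : ℂ))) ≠ 0) ∧
    (Multipliable fun x : I × {p : ℕ // 1 ≤ p} =>
      (1 - Complex.exp (-((m : ℂ) / 2) * ((ℓ x.1 : ℂ) + Complex.I * (θ x.1 : ℂ)))
         * Complex.exp (-((x.2 : ℕ) : ℂ) * ((ℓ x.1 : ℂ) + Complex.I * (θ x.1 : ℂ)))
         * Complex.exp (-s * (ℓ x.1 : ℂ)))⁻¹) ∧
    Zs ℓ θ (-((m : ℤ) + 2)) (s + (m : ℂ) / 2 + 1) ≠ 0 ∧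
    Zs ℓ θ (-(m : ℤ)) (s + (m : ℂ) / 2 + 2) / Zs ℓ θ (-((m : ℤ) + 2)) (s + (m : ℂ) / 2 + 1) =
      ∏' x : I × {p : ℕ // 1 ≤ p},
        (1 - Complex.exp (-((m : ℂ) / 2) * ((ℓ x.1 : ℂ) + Complex.I * (θ x.1 : ℂ)))
           * Complex.exp (-((x.2 : ℕ) : ℂ) * ((ℓ x.1 : ℂ) + Complex.I * (θ x.1 : ℂ)))
           * Complex.exp (-s * (ℓ x.1 : ℂ)))⁻¹ := by
  have hδs : δ ≤ s.re := by linarith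
  have hs₀ : 0 < s.re := by linarith
  have hfactor (i : I) (p : ℕ) :
      1 - Complex.exp (-((m : ℂ) / 2) * ((ℓ i : ℂ) + Complex.I * (θ i : ℂ)))
        * Complex.exp (-(p : ℂ) * ((ℓ i : ℂ) + Complex.I * (θ i : ℂ)))
        * Complex.exp (-s * (ℓ i : ℂ)) = 1 - selbergTerm ℓ θ m s (i, p, 0) := by
    simp [selbergTerm]
  have hprod := hasProd_inv_one_sub_selbergTerm hℓ hδs hsum hs₀ (θ := θ) (m := m)
  simp only [hfactor]
  exact ⟨fun i p _ => sub_ne_zero.2 (selbergTerm_ne_one ℓ θ m s hs₀ (hℓ i)).symm,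
    hprod.multipliable, Zs_neg_sub_two_ne_zero hℓ hδs hsum hs₀, hprod.tprod_eq.symm⟩

/-- `Z(−m, s + m/2 + 2) / Z(−(m+2), s + m/2 + 1)` as a product of reciprocals
over `(i, p) ∈ I × {p ≥ 1}`. -/
theorem statement4 {I : Type*} [Countable I] (ℓ θ : I → ℝ)
    (hℓ : ∀ i, 0 < ℓ i) (δ : ℝ) (hδ : δ < 2)
    (hsum : Summable fun i => Real.exp (-δ * ℓ i))
    (m : ℕ) (s : ℂ) (hs : 2 < s.re) :
    (∀ (i : I) (p : ℕ), 1 ≤ p →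
      (1 - Complex.exp (-((m : ℂ) / 2) * ((ℓ i : ℂ) + Complex.I * (θ i : ℂ)))
         * Complex.exp (-(p : ℂ) * ((ℓ i : ℂ) + Complex.I * (θ i : ℂ)))
         * Complex.exp (-s * (ℓ i : ℂ))) ≠ 0) ∧
    (Multipliable fun x : I × {p : ℕ // 1 ≤ p} =>
      (1 - Complex.exp (-((m : ℂ) / 2) * ((ℓ x.1 : ℂ) + Complex.I * (θ x.1 : ℂ)))
         * Complex.exp (-((x.2 : ℕ) : ℂ) * ((ℓ x.1 : ℂ) + Complex.I * (θ x.1 : ℂ)))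
         * Complex.exp (-s * (ℓ x.1 : ℂ)))⁻¹) ∧
    Zs ℓ θ (-((m : ℤ) + 2)) (s + (m : ℂ) / 2 + 1) ≠ 0 ∧
    Zs ℓ θ (-(m : ℤ)) (s + (m : ℂ) / 2 + 2) / Zs ℓ θ (-((m : ℤ) + 2)) (s + (m : ℂ) / 2 + 1) =
      ∏' x : I × {p : ℕ // 1 ≤ p},
        (1 - Complex.exp (-((m : ℂ) / 2) * ((ℓ x.1 : ℂ) + Complex.I * (θ x.1 : ℂ)))
           * Complex.exp (-((x.2 : ℕ) : ℂ) * ((ℓ x.1 : ℂ) + Complex.I * (θ x.1 : ℂ)))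
           * Complex.exp (-s * (ℓ x.1 : ℂ)))⁻¹ :=
  statement4_general ℓ θ hℓ δ hδ hsum m s hs
end

section
/- Let n ∈ ℕ with n ≥ 1 and s ∈ ℂ with Re(s) > n + 3/2. Let G_n(s) = ∏_{i ∈ I} ∏_{k ≥ n} (1 − exp(−(k + 1/2)(ℓ i + i·θ i))·exp(−s·ℓ i)) and let R_{ρ_{2n−1}}(s) = ∏_{l=0}^{2n−1} R(2n − 1 − 2l, s − (2n−1)/2 + l). Then Z(2n+1, s − n + 3/2) and Z(−(2n−1), s + n + 3/2) are nonzero, and G_n(s)² · R_{ρ_{2n−1}}(s) = ( Z(2n−1, s − n + 1/2) · Z(−(2n+1), s + n + 1/2) ) / ( Z(2n+1, s − n + 3/2) · Z(−(2n−1), s + n + 3/2) ). -/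
open Filter Function Set

theorem HasProd.mul_of_slice_zero_of_shift {α β : Type*} [CommMonoid α] [TopologicalSpace α]
    [ContinuousMul α] {f : β × ℕ → α} {a b : α} (h₀ : HasProd (fun x => f (x, 0)) a)
    (h₁ : HasProd (fun x : β × ℕ => f (x.1, x.2 + 1)) b) : HasProd f (a * b) := by
  have inj₀ : Injective fun x : β => (x, 0) := fun x y h => (Prod.mk.inj h).1
  have inj₁ : Injective fun x : β × ℕ => (x.1, x.2 + 1) := fun x y h =>
    Prod.ext (Prod.mk.inj h).1 (Nat.succ_injective (Prod.mk.inj h).2)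
  have hcompl : range (fun x : β × ℕ => (x.1, x.2 + 1)) = (range fun x : β => (x, 0))ᶜ := by
    ext ⟨x, _ | m⟩ <;> simp
  exact (inj₀.hasProd_range_iff.2 h₀).mul_compl (hcompl ▸ inj₁.hasProd_range_iff.2 h₁)

lemma multipliable_one_sub_of_summable_norm_s11 {J R : Type*} [NormedCommRing R] [NormOneClass R]
    [CompleteSpace R] {w : J → R} (hw : Summable fun j => ‖w j‖) :
    Multipliable fun j => 1 - w j := by
  simpa only [sub_eq_add_neg] using multipliable_one_add_of_summable (f := fun j => -w j)
    (by simpa only [norm_neg] using hw)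

lemma tprod_one_sub_ne_zero_of_summable_norm_s11 {J R : Type*} [NormedCommRing R] [NormOneClass R]
    [CompleteSpace R] [NormMulClass R] {w : J → R} (hw₁ : ∀ j, ‖w j‖ < 1)
    (hw : Summable fun j => ‖w j‖) :
    ∏' j, (1 - w j) ≠ 0 := by
  simp only [sub_eq_add_neg]
  refine tprod_one_add_ne_zero_of_summable (fun j h => ?_) (by simpa only [norm_neg] using hw)
  have := hw₁ j
  rw [add_neg_eq_zero] at h
  simp [← h] at this

lemma exists_pos_le_of_summable_exp_neg_mul {I : Type*} {ℓ : I → ℝ} (hℓ : ∀ i, 0 < ℓ i)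
    {c : ℝ} (hc : 0 < c) (hsum : Summable fun i => Real.exp (-c * ℓ i)) :
    ∃ ε > 0, ∀ i, ε ≤ ℓ i := by
  cases isEmpty_or_nonempty I
  · exact ⟨1, one_pos, isEmptyElim⟩
  have hlim : Tendsto ℓ cofinite atTop := by
    have := Real.tendsto_exp_comp_nhds_zero.1 hsum.tendsto_cofinite_zero
    simpa [neg_mul, tendsto_neg_atBot_iff, tendsto_const_mul_atTop_of_pos hc] using this
  obtain ⟨i₀, hi₀⟩ := hlim.exists_forall_le
  exact ⟨ℓ i₀, hℓ i₀, hi₀⟩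

lemma summable_exp_neg_add_nat_nat_mul {I : Type*} {ℓ : I → ℝ} {c : ℝ} (hℓ : ∀ i, 0 < ℓ i)
    (hc : 0 < c) (hsum : Summable fun i => Real.exp (-c * ℓ i)) {b : ℝ} (hb : c ≤ b) :
    Summable fun x : I × ℕ × ℕ => Real.exp (-(b + x.2.1 + x.2.2) * ℓ x.1) := by
  obtain ⟨ε, hε, hεℓ⟩ := exists_pos_le_of_summable_exp_neg_mul hℓ hc hsum
  have hgeom : Summable fun p : ℕ => Real.exp (-ε) ^ p :=
    summable_geometric_of_lt_one (Real.exp_pos _).le (Real.exp_lt_one_iff.2 (by linarith))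
  have hbound : Summable fun x : I × ℕ × ℕ =>
      Real.exp (-c * ℓ x.1) * (Real.exp (-ε) ^ x.2.1 * Real.exp (-ε) ^ x.2.2) :=
    hsum.mul_of_nonneg (hgeom.mul_of_nonneg hgeom (fun _ => by positivity) fun _ => by positivity)
      (fun _ => by positivity) fun _ => by positivity
  refine hbound.of_nonneg_of_le (fun _ => (Real.exp_pos _).le) fun ⟨i, p, q⟩ => ?_
  have hℓi := hℓ i
  calc Real.exp (-(b + p + q) * ℓ i)
      = Real.exp (-b * ℓ i) * (Real.exp (-ℓ i) ^ p * Real.exp (-ℓ i) ^ q) := by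
        rw [← Real.exp_nat_mul, ← Real.exp_nat_mul, ← Real.exp_add, ← Real.exp_add]
        ring_nf
    _ ≤ Real.exp (-c * ℓ i) * (Real.exp (-ε) ^ p * Real.exp (-ε) ^ q) := by
        gcongr <;> linarith [hεℓ i]

namespace Selberg

variable {I : Type*} (ℓ θ : I → ℝ)

noncomputable def rTerm (k : ℤ) (σ : ℂ) (i : I) : ℂ :=
  Complex.exp (Complex.I * ((k : ℂ) / 2) * (θ i : ℂ)) * Complex.exp (-σ * (ℓ i : ℂ))

noncomputable def Zslice (k : ℤ) (σ : ℂ) : ℂ :=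
  ∏' x : I × ℕ, (1 - rTerm ℓ θ (k - 2 * x.2) (σ + x.2) x.1)

lemma Rz_eq_tprod (k : ℤ) (σ : ℂ) : Rz ℓ θ k σ = ∏' i, (1 - rTerm ℓ θ k σ i) := rfl

lemma Zs_eq_tprod (k : ℤ) (σ : ℂ) :
    Zs ℓ θ k σ = ∏' x : I × ℕ × ℕ,
      (1 - rTerm ℓ θ (k - 2 * x.2.1 + 2 * x.2.2) (σ + x.2.1 + x.2.2) x.1) :=
  tprod_congr fun x => by
    simp only [rTerm, ← Complex.exp_add]
    congr 2
    push_cast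
    ring

lemma norm_rTerm (k : ℤ) (σ : ℂ) (i : I) : ‖rTerm ℓ θ k σ i‖ = Real.exp (-σ.re * ℓ i) := by
  simp [rTerm, Complex.norm_exp]

lemma tprod_G_eq_Zslice (n : ℕ) (s : ℂ) :
    ∏' x : I × {k : ℕ // n ≤ k},
        (1 - Complex.exp (-(((x.2 : ℕ) : ℂ) + 1 / 2) * ((ℓ x.1 : ℂ) + Complex.I * (θ x.1 : ℂ)))
          * Complex.exp (-s * (ℓ x.1 : ℂ))) =
      Zslice ℓ θ (-(2 * n + 1)) (s + n + 1 / 2) := by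
  have hshift :
      Bijective fun x : I × ℕ => (x.1, (⟨n + x.2, n.le_add_right _⟩ : {k // n ≤ k})) := by
    refine ⟨fun x y h => ?_, fun ⟨i, k, hk⟩ => ⟨(i, k - n), by simp [Nat.add_sub_cancel' hk]⟩⟩
    simp only [Prod.mk.injEq, Subtype.mk.injEq, Nat.add_left_cancel_iff] at h
    exact Prod.ext h.1 h.2
  rw [Zslice, ← (Equiv.ofBijective _ hshift).tprod_eq]
  refine tprod_congr fun x => ?_
  simp only [Equiv.ofBijective_apply, rTerm, ← Complex.exp_add]
  congr 2
  push_cast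
  ring

variable {ℓ} {c : ℝ}

lemma summable_norm_rTerm_nat_nat (hℓ : ∀ i, 0 < ℓ i) (hc : 0 < c)
    (hsum : Summable fun i => Real.exp (-c * ℓ i)) {σ : ℂ} (hσ : c ≤ σ.re)
    (κ : I × ℕ × ℕ → ℤ) :
    Summable fun x : I × ℕ × ℕ => ‖rTerm ℓ θ (κ x) (σ + x.2.1 + x.2.2) x.1‖ := by
  simpa [norm_rTerm] using summable_exp_neg_add_nat_nat_mul hℓ hc hsum hσ

lemma summable_norm_rTerm_nat (hℓ : ∀ i, 0 < ℓ i) (hc : 0 < c)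
    (hsum : Summable fun i => Real.exp (-c * ℓ i)) {σ : ℂ} (hσ : c ≤ σ.re) (κ : I × ℕ → ℤ) :
    Summable fun x : I × ℕ => ‖rTerm ℓ θ (κ x) (σ + x.2) x.1‖ := by
  have inj : Injective fun x : I × ℕ => (x.1, x.2, 0) := fun x y h => by
    simp only [Prod.mk.injEq] at h
    exact Prod.ext h.1 h.2.1
  simpa [norm_rTerm, comp_def] using
    (summable_exp_neg_add_nat_nat_mul hℓ hc hsum hσ).comp_injective inj

lemma summable_norm_rTerm (hℓ : ∀ i, 0 < ℓ i) (hsum : Summable fun i => Real.exp (-c * ℓ i))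
    {σ : ℂ} (hσ : c ≤ σ.re) (k : ℤ) :
    Summable fun i => ‖rTerm ℓ θ k σ i‖ :=
  hsum.of_nonneg_of_le (fun _ => norm_nonneg _) fun i => by
    rw [norm_rTerm]
    exact Real.exp_le_exp.2 (by nlinarith [hℓ i])

lemma Zs_eq_Zslice_mul (hℓ : ∀ i, 0 < ℓ i) (hc : 0 < c)
    (hsum : Summable fun i => Real.exp (-c * ℓ i)) (k : ℤ) {σ : ℂ} (hσ : c ≤ σ.re) :
    Zs ℓ θ k σ = Zslice ℓ θ k σ * Zs ℓ θ (k + 2) (σ + 1) := by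
  have hσ₁ : c ≤ (σ + 1).re := by simp; linarith
  have hslice := (multipliable_one_sub_of_summable_norm_s11
    (summable_norm_rTerm_nat θ hℓ hc hsum hσ fun x => k - 2 * x.2)).hasProd
  have hshift := (multipliable_one_sub_of_summable_norm_s11 (summable_norm_rTerm_nat_nat θ hℓ hc hsum
    hσ₁ fun x => k + 2 - 2 * x.2.1 + 2 * x.2.2)).hasProd
  rw [Zs_eq_tprod, Zs_eq_tprod, Zslice]
  refine ((Equiv.prodAssoc I ℕ ℕ).hasProd_iff.1
    (HasProd.mul_of_slice_zero_of_shift ?_ ?_)).tprod_eq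
  · simpa using hslice
  · convert (Equiv.prodAssoc I ℕ ℕ).hasProd_iff.2 hshift using 2 with ⟨⟨i, p⟩, q⟩
    simp only [comp_apply, Equiv.prodAssoc_apply]
    congr 2 <;> push_cast <;> ring

lemma Zslice_eq_Rz_mul (hℓ : ∀ i, 0 < ℓ i) (hc : 0 < c)
    (hsum : Summable fun i => Real.exp (-c * ℓ i)) (k : ℤ) {σ : ℂ} (hσ : c ≤ σ.re) :
    Zslice ℓ θ k σ = Rz ℓ θ k σ * Zslice ℓ θ (k - 2) (σ + 1) := by
  have hσ₁ : c ≤ (σ + 1).re := by simp; linarith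
  have hR := (multipliable_one_sub_of_summable_norm_s11
    (summable_norm_rTerm θ hℓ hsum hσ k)).hasProd
  have hshift := (multipliable_one_sub_of_summable_norm_s11
    (summable_norm_rTerm_nat θ hℓ hc hsum hσ₁ fun x => k - 2 - 2 * x.2)).hasProd
  rw [Zslice, Zslice, Rz_eq_tprod]
  refine (HasProd.mul_of_slice_zero_of_shift ?_ ?_).tprod_eq
  · simpa using hR
  · convert hshift using 3 with x
    congr 1 <;> push_cast <;> ring

lemma Zslice_eq_prod_Rz_mul (hℓ : ∀ i, 0 < ℓ i) (hc : 0 < c)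
    (hsum : Summable fun i => Real.exp (-c * ℓ i)) (k : ℤ) {σ : ℂ} (hσ : c ≤ σ.re) (m : ℕ) :
    Zslice ℓ θ k σ =
      (∏ l ∈ Finset.range m, Rz ℓ θ (k - 2 * l) (σ + l)) * Zslice ℓ θ (k - 2 * m) (σ + m) := by
  induction m with
  | zero => simp
  | succ m ih =>
    have hm : (0 : ℝ) ≤ m := m.cast_nonneg
    have hσm : c ≤ (σ + m).re := by simp; linarith
    rw [ih, Zslice_eq_Rz_mul θ hℓ hc hsum _ hσm, Finset.prod_range_succ, mul_assoc]
    push_cast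
    ring_nf

lemma Zs_ne_zero (hℓ : ∀ i, 0 < ℓ i) (hc : 0 < c)
    (hsum : Summable fun i => Real.exp (-c * ℓ i)) (k : ℤ) {σ : ℂ} (hσ : c ≤ σ.re) :
    Zs ℓ θ k σ ≠ 0 := by
  rw [Zs_eq_tprod]
  refine tprod_one_sub_ne_zero_of_summable_norm_s11 (fun ⟨i, p, q⟩ => ?_)
    (summable_norm_rTerm_nat_nat θ hℓ hc hsum hσ _)
  rw [norm_rTerm, Real.exp_lt_one_iff]
  have hp : (0 : ℝ) ≤ p := p.cast_nonneg
  have hq : (0 : ℝ) ≤ q := q.cast_nonneg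
  have : 0 < (σ + p + q).re := by simp; linarith
  nlinarith [hℓ i]

end Selberg

open Selberg in
theorem statement11_general {I : Type*} (ℓ θ : I → ℝ)
    (hℓ : ∀ i, 0 < ℓ i) (δ : ℝ) (hδ : δ < 2)
    (hsum : Summable fun i => Real.exp (-δ * ℓ i))
    (n : ℕ) (s : ℂ) (hs : (n : ℝ) + 3 / 2 < s.re) :
    Zs ℓ θ (2 * (n : ℤ) + 1) (s - (n : ℂ) + 3 / 2) ≠ 0 ∧
    Zs ℓ θ (-(2 * (n : ℤ) - 1)) (s + (n : ℂ) + 3 / 2) ≠ 0 ∧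
    (∏' x : I × {k : ℕ // n ≤ k},
        (1 - Complex.exp (-(((x.2 : ℕ) : ℂ) + 1 / 2) * ((ℓ x.1 : ℂ) + Complex.I * (θ x.1 : ℂ)))
           * Complex.exp (-s * (ℓ x.1 : ℂ)))) ^ 2 *
      (∏ l ∈ Finset.range (2 * n),
        Rz ℓ θ (2 * (n : ℤ) - 1 - 2 * (l : ℤ)) (s - (2 * (n : ℂ) - 1) / 2 + (l : ℂ))) =
      (Zs ℓ θ (2 * (n : ℤ) - 1) (s - (n : ℂ) + 1 / 2) *
          Zs ℓ θ (-(2 * (n : ℤ) + 1)) (s + (n : ℂ) + 1 / 2)) /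
      (Zs ℓ θ (2 * (n : ℤ) + 1) (s - (n : ℂ) + 3 / 2) *
          Zs ℓ θ (-(2 * (n : ℤ) - 1)) (s + (n : ℂ) + 3 / 2)) := by
  have hsum₂ : Summable fun i => Real.exp (-2 * ℓ i) :=
    hsum.of_nonneg_of_le (fun _ => (Real.exp_pos _).le) fun i =>
      Real.exp_le_exp.2 (by nlinarith [hℓ i])
  have hn : (0 : ℝ) ≤ n := n.cast_nonneg
  have h₁ : 2 ≤ (s - n + 1 / 2).re := by simp; linarith
  have h₂ : 2 ≤ (s + n + 1 / 2).re := by simp; linarith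
  have hZ₃ := Zs_ne_zero θ hℓ two_pos hsum₂ (2 * n + 1) (σ := s - n + 3 / 2) (by simp; linarith)
  have hZ₄ := Zs_ne_zero θ hℓ two_pos hsum₂ (-(2 * n - 1)) (σ := s + n + 3 / 2) (by simp; linarith)
  have hZ₁ : Zs ℓ θ (2 * n - 1) (s - n + 1 / 2) =
      (∏ l ∈ Finset.range (2 * n), Rz ℓ θ (2 * n - 1 - 2 * l) (s - (2 * n - 1) / 2 + l)) *
        Zslice ℓ θ (-(2 * n + 1)) (s + n + 1 / 2) * Zs ℓ θ (2 * n + 1) (s - n + 3 / 2) := by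
    rw [Zs_eq_Zslice_mul θ hℓ two_pos hsum₂ _ h₁,
      Zslice_eq_prod_Rz_mul θ hℓ two_pos hsum₂ _ h₁ (2 * n)]
    push_cast
    ring_nf
  have hZ₂ : Zs ℓ θ (-(2 * n + 1)) (s + n + 1 / 2) =
      Zslice ℓ θ (-(2 * n + 1)) (s + n + 1 / 2) * Zs ℓ θ (-(2 * n - 1)) (s + n + 3 / 2) := by
    rw [Zs_eq_Zslice_mul θ hℓ two_pos hsum₂ _ h₂]
    ring_nf
  refine ⟨hZ₃, hZ₄, ?_⟩
  rw [tprod_G_eq_Zslice, eq_div_iff (mul_ne_zero hZ₃ hZ₄), hZ₁, hZ₂]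
  ring

/-- `G_n(s)² R_{ρ_{2n−1}}(s)` as a ratio of four Selberg zeta values. -/
theorem statement11 {I : Type*} [Countable I] (ℓ θ : I → ℝ)
    (hℓ : ∀ i, 0 < ℓ i) (δ : ℝ) (hδ : δ < 2)
    (hsum : Summable fun i => Real.exp (-δ * ℓ i))
    (n : ℕ) (hn : 1 ≤ n) (s : ℂ) (hs : (n : ℝ) + 3 / 2 < s.re) :
    Zs ℓ θ (2 * (n : ℤ) + 1) (s - (n : ℂ) + 3 / 2) ≠ 0 ∧
    Zs ℓ θ (-(2 * (n : ℤ) - 1)) (s + (n : ℂ) + 3 / 2) ≠ 0 ∧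
    (∏' x : I × {k : ℕ // n ≤ k},
        (1 - Complex.exp (-(((x.2 : ℕ) : ℂ) + 1 / 2) * ((ℓ x.1 : ℂ) + Complex.I * (θ x.1 : ℂ)))
           * Complex.exp (-s * (ℓ x.1 : ℂ)))) ^ 2 *
      (∏ l ∈ Finset.range (2 * n),
        Rz ℓ θ (2 * (n : ℤ) - 1 - 2 * (l : ℤ)) (s - (2 * (n : ℂ) - 1) / 2 + (l : ℂ))) =
      (Zs ℓ θ (2 * (n : ℤ) - 1) (s - (n : ℂ) + 1 / 2) *
          Zs ℓ θ (-(2 * (n : ℤ) + 1)) (s + (n : ℂ) + 1 / 2)) /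
      (Zs ℓ θ (2 * (n : ℤ) + 1) (s - (n : ℂ) + 3 / 2) *
          Zs ℓ θ (-(2 * (n : ℤ) - 1)) (s + (n : ℂ) + 3 / 2)) :=
  statement11_general ℓ θ hℓ δ hδ hsum n s hs
end

section
/- (Value of F_n(s)⁴ R_{ρ_{2(n−1)}}(s)² at s = 0.) Let n ∈ ℕ with n ≥ 1 and define Φ_n(s) = ( 𝒵(2(n−1))(s − n + 1) · 𝒵(−2n)(s + n) ) / ( 𝒵(−2(n−1))(s + n + 1) · 𝒵(2n)(s − n + 2) ), which on Re(s) > n + 1 agrees with F_n(s)² R_{ρ_{2(n−1)}}(s). Then the function s ↦ Φ_n(s)², restricted to the set of s where 𝒵(−2(n−1))(s + n + 1) ≠ 0 and 𝒵(2n)(s − n + 2) ≠ 0, tends to exp( −(2/π)·(2n² − 2n + 1/3)·V − 2πi·(η(2n) − η(2(n−1))) ) as s → 0 within that set. -/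
/-!
Applying the functional equation to the two factors of the numerator `N` gives
`N(s) = C(s) · G(-s)`, where `G` is the denominator and `C` an explicit product of exponentials.
Hence `Φ_n(s)² = C(s)² · (G(-s)/G(s))²`, and the second factor tends to `1`: near `0`,
`G(s) = s^m h(s)` with `h(0) ≠ 0`, and the sign `(-1)^m` dies on squaring. Applying the functional
equation twice at a point where `𝒵(2n)` does not vanish shows `e^{iπη(-2n)} = e^{-iπη(2n)}`,
which turns `C(0)²` into the stated value.
-/

open Filter Topology

theorem tendsto_sq_div_comp_neg_nhdsWithin {g : ℂ → ℂ} (hg : AnalyticAt ℂ g 0) {S : Set ℂ}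
    (hS : ∀ s ∈ S, g s ≠ 0) :
    Tendsto (fun s => (g (-s) / g s) ^ 2) (𝓝[S] 0) (𝓝 1) := by
  rcases (𝓝[S] (0 : ℂ)).eq_or_neBot with hbot | hne
  · simp [hbot]
  have hord : analyticOrderAt g 0 ≠ ⊤ := by
    intro htop
    obtain ⟨s, hs0, hsS⟩ := (((analyticOrderAt_eq_top.mp htop).filter_mono nhdsWithin_le_nhds).and
      (self_mem_nhdsWithin : S ∈ 𝓝[S] (0 : ℂ))).exists
    exact hS s hsS hs0
  obtain ⟨m, hm⟩ := ENat.ne_top_iff_exists.mp hord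
  obtain ⟨h, hh, hh0, hgh⟩ := hg.analyticOrderAt_eq_natCast.mp hm.symm
  simp only [sub_zero, smul_eq_mul] at hgh
  have hlim : Tendsto (fun s => (h (-s) / h s) ^ 2) (𝓝 0) (𝓝 1) := by
    have := (((hh.continuousAt.comp_of_eq continuous_neg.continuousAt neg_zero).tendsto.div
      hh.continuousAt.tendsto hh0).pow 2)
    simpa [Function.comp_def, hh0] using this
  refine (hlim.mono_left nhdsWithin_le_nhds).congr' ?_
  filter_upwards [hgh.filter_mono nhdsWithin_le_nhds,
    ((continuous_neg.tendsto' (0 : ℂ) 0 neg_zero).eventually hgh).filter_mono nhdsWithin_le_nhds,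
    self_mem_nhdsWithin] with s hgs hgns hsS
  have hgs0 := hS s hsS
  rw [hgs] at hgs0
  have hsm : s ^ m ≠ 0 := left_ne_zero_of_mul hgs0
  rw [hgs, hgns, neg_pow, mul_div_mul_comm, mul_div_cancel_right₀ _ hsm, mul_pow, ← pow_mul,
    mul_comm m, pow_mul, neg_one_sq, one_pow, one_mul]

theorem tendsto_sq_div_of_eq_mul_comp_neg {N G C : ℂ → ℂ} (hG : AnalyticAt ℂ G 0)
    (hC : ContinuousAt C 0) (hN : ∀ s, N s = C s * G (-s)) {S : Set ℂ}
    (hS : ∀ s ∈ S, G s ≠ 0) :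
    Tendsto (fun s => (N s / G s) ^ 2) (𝓝[S] 0) (𝓝 (C 0 ^ 2)) := by
  have hlim := ((hC.tendsto.pow 2).mono_left nhdsWithin_le_nhds).mul
    (tendsto_sq_div_comp_neg_nhdsWithin hG hS)
  rw [mul_one] at hlim
  refine hlim.congr fun s => ?_
  rw [hN, mul_div_assoc, mul_pow]

/-- The factor in the functional equation `𝒵 k (1 + s) = feFactor V η k s * 𝒵 (-k) (1 - s)`. -/
noncomputable def feFactor (V : ℝ) (η : ℤ → ℝ) (k : ℤ) (s : ℂ) : ℂ :=
  Complex.exp (Complex.I * (Real.pi : ℂ) * (η k : ℂ)) *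
    Complex.exp (((V : ℂ) / (Real.pi : ℂ)) * (s ^ 3 / 3 - (k : ℂ) ^ 2 * s / 4))

section FunctionalEquation

variable {V : ℝ} {η : ℤ → ℝ} {𝒵 : ℤ → ℂ → ℂ}

theorem feFactor_mul_feFactor_neg (k : ℤ) (s : ℂ) :
    feFactor V η k s * feFactor V η (-k) (-s) =
      Complex.exp (Complex.I * Real.pi * η k) * Complex.exp (Complex.I * Real.pi * η (-k)) := by
  -- the polynomial part `s ^ 3 / 3 - k ^ 2 * s / 4` is odd in `s` and even in `k`
  have hodd : ((V : ℂ) / Real.pi) * (s ^ 3 / 3 - (k : ℂ) ^ 2 * s / 4) +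
      ((V : ℂ) / Real.pi) * ((-s) ^ 3 / 3 - ((-k : ℤ) : ℂ) ^ 2 * (-s) / 4) = 0 := by
    push_cast; ring
  rw [feFactor, feFactor, mul_mul_mul_comm, ← Complex.exp_add _ (_ * (_ - _)), hodd,
    Complex.exp_zero, mul_one]

theorem sq_feFactor_mul_feFactor (n : ℕ)
    (hη : Complex.exp (Complex.I * Real.pi * η (2 * n)) *
      Complex.exp (Complex.I * Real.pi * η (-(2 * n))) = 1) :
    (feFactor V η (2 * ((n : ℤ) - 1)) (-n) * feFactor V η (-(2 * n)) (n - 1)) ^ 2 =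
      Complex.exp (-(2 / (Real.pi : ℂ)) * (2 * (n : ℂ) ^ 2 - 2 * (n : ℂ) + 1 / 3) * (V : ℂ) -
        2 * (Real.pi : ℂ) * Complex.I * ((η (2 * (n : ℤ)) : ℂ) - (η (2 * ((n : ℤ) - 1)) : ℂ))) := by
  have hη' : Complex.exp (Complex.I * Real.pi * η (-(2 * n))) =
      Complex.exp (-(Complex.I * Real.pi * η (2 * n))) := by
    rw [Complex.exp_neg]
    exact eq_inv_of_mul_eq_one_right hη
  simp only [feFactor, hη', ← Complex.exp_add]
  rw [← Complex.exp_nat_mul]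
  congr 1
  push_cast
  field_simp
  ring

variable (hfe : ∀ (k : ℤ) (s : ℂ), 𝒵 k (1 + s) = feFactor V η k s * 𝒵 (-k) (1 - s))
include hfe

theorem exp_eta_mul_exp_eta_neg {k : ℤ} {w : ℂ} (hw : 𝒵 k w ≠ 0) :
    Complex.exp (Complex.I * Real.pi * η k) * Complex.exp (Complex.I * Real.pi * η (-k)) = 1 := by
  obtain ⟨s, rfl⟩ : ∃ s, w = 1 + s := ⟨w - 1, by ring⟩
  have hround := hfe k s
  rw [sub_eq_add_neg, hfe (-k) (-s), neg_neg, sub_neg_eq_add, ← mul_assoc,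
    feFactor_mul_feFactor_neg] at hround
  exact mul_right_cancel₀ hw (by rw [one_mul, ← hround])

theorem zeta_mul_zeta_eq_feFactor_mul (n : ℕ) (s : ℂ) :
    𝒵 (2 * ((n : ℤ) - 1)) (s - n + 1) * 𝒵 (-2 * n) (s + n) =
      (feFactor V η (2 * ((n : ℤ) - 1)) (s - n) * feFactor V η (-2 * n) (s + n - 1)) *
        (𝒵 (-2 * ((n : ℤ) - 1)) (-s + n + 1) * 𝒵 (2 * n) (-s - n + 2)) := by
  have h₁ := hfe (2 * ((n : ℤ) - 1)) (s - n)
  have h₂ := hfe (-2 * n) (s + n - 1)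
  rw [show 1 + (s - n) = s - n + 1 by ring, show (1 : ℂ) - (s - n) = -s + n + 1 by ring,
    show -(2 * ((n : ℤ) - 1)) = -2 * ((n : ℤ) - 1) by ring] at h₁
  rw [add_sub_cancel, show (1 : ℂ) - (s + n - 1) = -s - n + 2 by ring,
    show -(-2 * (n : ℤ)) = 2 * n by ring] at h₂
  rw [h₁, h₂]
  ring

end FunctionalEquation

theorem statement12_general (V : ℝ) (η : ℤ → ℝ) (𝒵 : ℤ → ℂ → ℂ)
    (hentire : ∀ k : ℤ, Differentiable ℂ (𝒵 k))
    (hfe : ∀ (k : ℤ) (s : ℂ), 𝒵 k (1 + s) =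
      Complex.exp (Complex.I * (Real.pi : ℂ) * (η k : ℂ)) *
      Complex.exp (((V : ℂ) / (Real.pi : ℂ)) * (s ^ 3 / 3 - (k : ℂ) ^ 2 * s / 4)) *
      𝒵 (-k) (1 - s))
    (n : ℕ) :
    Filter.Tendsto
      (fun s : ℂ =>
        ((𝒵 (2 * ((n : ℤ) - 1)) (s - (n : ℂ) + 1) * 𝒵 (-2 * (n : ℤ)) (s + (n : ℂ))) /
         (𝒵 (-2 * ((n : ℤ) - 1)) (s + (n : ℂ) + 1) * 𝒵 (2 * (n : ℤ)) (s - (n : ℂ) + 2))) ^ 2)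
      (nhdsWithin 0 {s : ℂ | 𝒵 (-2 * ((n : ℤ) - 1)) (s + (n : ℂ) + 1) ≠ 0 ∧
        𝒵 (2 * (n : ℤ)) (s - (n : ℂ) + 2) ≠ 0})
      (nhds (Complex.exp
        (-(2 / (Real.pi : ℂ)) * (2 * (n : ℂ) ^ 2 - 2 * (n : ℂ) + 1 / 3) * (V : ℂ) -
          2 * (Real.pi : ℂ) * Complex.I *
            ((η (2 * (n : ℤ)) : ℂ) - (η (2 * ((n : ℤ) - 1)) : ℂ))))) := by
  set S := {s : ℂ | 𝒵 (-2 * ((n : ℤ) - 1)) (s + (n : ℂ) + 1) ≠ 0 ∧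
    𝒵 (2 * (n : ℤ)) (s - (n : ℂ) + 2) ≠ 0}
  rcases S.eq_empty_or_nonempty with hS | ⟨s₀, hs₀⟩
  · rw [hS, nhdsWithin_empty]
    exact tendsto_bot
  have hG : AnalyticAt ℂ (fun s => 𝒵 (-2 * ((n : ℤ) - 1)) (s + n + 1) *
      𝒵 (2 * (n : ℤ)) (s - n + 2)) 0 :=
    (((hentire _).comp (by fun_prop)).mul ((hentire _).comp (by fun_prop))).analyticAt 0
  have hC : ContinuousAt (fun s => feFactor V η (2 * ((n : ℤ) - 1)) (s - n) *
      feFactor V η (-2 * n) (s + n - 1)) 0 := by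
    unfold feFactor
    fun_prop
  convert tendsto_sq_div_of_eq_mul_comp_neg hG hC (zeta_mul_zeta_eq_feFactor_mul hfe n)
    (fun s (hs : s ∈ S) => mul_ne_zero hs.1 hs.2) using 2
  rw [zero_sub, zero_add, show (-2 * n : ℤ) = -(2 * n) by ring,
    sq_feFactor_mul_feFactor n (exp_eta_mul_exp_eta_neg hfe hs₀.2)]

/-- limit value of `F_n(s)⁴ R_{ρ_{2(n−1)}}(s)²` at `s = 0`, expressed through the
entire extensions `𝒵 k` of the Selberg zeta functions. -/
theorem statement12 {I : Type*} [Countable I] (ℓ θ : I → ℝ)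
    (hℓ : ∀ i, 0 < ℓ i) (δ : ℝ) (hδ : δ < 2)
    (hsum : Summable fun i => Real.exp (-δ * ℓ i))
    (V : ℝ) (hV : 0 < V) (η : ℤ → ℝ) (𝒵 : ℤ → ℂ → ℂ)
    (hentire : ∀ k : ℤ, Differentiable ℂ (𝒵 k))
    (hagree : ∀ (k : ℤ) (s : ℂ), 2 < s.re → 𝒵 k s = Zs ℓ θ k s)
    (hfe : ∀ (k : ℤ) (s : ℂ), 𝒵 k (1 + s) =
      Complex.exp (Complex.I * (Real.pi : ℂ) * (η k : ℂ)) *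
      Complex.exp (((V : ℂ) / (Real.pi : ℂ)) * (s ^ 3 / 3 - (k : ℂ) ^ 2 * s / 4)) *
      𝒵 (-k) (1 - s))
    (n : ℕ) (hn : 1 ≤ n) :
    Filter.Tendsto
      (fun s : ℂ =>
        ((𝒵 (2 * ((n : ℤ) - 1)) (s - (n : ℂ) + 1) * 𝒵 (-2 * (n : ℤ)) (s + (n : ℂ))) /
         (𝒵 (-2 * ((n : ℤ) - 1)) (s + (n : ℂ) + 1) * 𝒵 (2 * (n : ℤ)) (s - (n : ℂ) + 2))) ^ 2)
      (nhdsWithin 0 {s : ℂ | 𝒵 (-2 * ((n : ℤ) - 1)) (s + (n : ℂ) + 1) ≠ 0 ∧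
        𝒵 (2 * (n : ℤ)) (s - (n : ℂ) + 2) ≠ 0})
      (nhds (Complex.exp
        (-(2 / (Real.pi : ℂ)) * (2 * (n : ℂ) ^ 2 - 2 * (n : ℂ) + 1 / 3) * (V : ℂ) -
          2 * (Real.pi : ℂ) * Complex.I *
            ((η (2 * (n : ℤ)) : ℂ) - (η (2 * ((n : ℤ) - 1)) : ℂ))))) :=
  statement12_general V η 𝒵 hentire hfe n
end

section
/- (Value of G_n(s)⁴ R_{ρ_{2n−1}}(s)² at s = 0.) Let n ∈ ℕ with n ≥ 1 and define Ψ_n(s) = ( 𝒵(2n−1)(s − n + 1/2) · 𝒵(−(2n+1))(s + n + 1/2) ) / ( 𝒵(2n+1)(s − n + 3/2) · 𝒵(−(2n−1))(s + n + 3/2) ), which on Re(s) > n + 3/2 agrees with G_n(s)² R_{ρ_{2n−1}}(s). Then the function s ↦ Ψ_n(s)², restricted to the set of s where 𝒵(2n+1)(s − n + 3/2) ≠ 0 and 𝒵(−(2n−1))(s + n + 3/2) ≠ 0, tends to exp( −(2/π)·(2n² − 1/6)·V − 2πi·(η(2n+1) − η(2n−1)) ) as s → 0 within that set. -/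
open Filter Topology

theorem AnalyticAt.tendsto_div_comp_neg_sq {f : ℂ → ℂ} (hf : AnalyticAt ℂ f 0) :
    Tendsto (fun s => (f (-s) / f s) ^ 2) (𝓝[{s | f s ≠ 0}] 0) (𝓝 1) := by
  by_cases hzero : ∀ᶠ s in 𝓝 0, f s = 0
  · have hbot : 𝓝[{s | f s ≠ 0}] 0 = ⊥ := by
      rw [← eventually_false_iff_eq_bot]
      filter_upwards [hzero.filter_mono nhdsWithin_le_nhds, self_mem_nhdsWithin] with s h0 hne
      exact hne h0
    simp [hbot]
  obtain ⟨m, g, hg, hg0, hfg⟩ := hf.exists_eventuallyEq_pow_smul_nonzero_iff.mpr hzero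
  have hg_lim : Tendsto (fun s => (g (-s) / g s) ^ 2) (𝓝 0) (𝓝 1) := by
    have h : ContinuousAt (fun s => (g (-s) / g s) ^ 2) 0 :=
      ((hg.continuousAt.comp_of_eq continuous_neg.continuousAt neg_zero).div
        hg.continuousAt hg0).pow 2
    simpa [hg0] using h.tendsto
  have hfg_neg : ∀ᶠ s in 𝓝 0, f (-s) = (-s - 0) ^ m • g (-s) :=
    (continuous_neg.tendsto' 0 0 neg_zero).eventually hfg
  refine (hg_lim.mono_left nhdsWithin_le_nhds).congr' ?_
  filter_upwards [hfg.filter_mono nhdsWithin_le_nhds, hfg_neg.filter_mono nhdsWithin_le_nhds,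
    self_mem_nhdsWithin] with s hs hs_neg hfs
  simp only [hs, sub_zero, smul_eq_mul] at hfs hs_neg
  rw [hs, hs_neg, sub_zero, smul_eq_mul, neg_pow, mul_assoc, mul_div_assoc,
    mul_div_mul_left _ _ (left_ne_zero_of_mul hfs), mul_pow, ← pow_mul, mul_comm m, pow_mul,
    neg_one_sq, one_pow, one_mul]

/-- The factor of the functional equation: `hfe` reads
`𝒵 k (1 + s) = selbergFunctionalFactor V η k s * 𝒵 (-k) (1 - s)`. -/
noncomputable def selbergFunctionalFactor (V : ℝ) (η : ℤ → ℝ) (k : ℤ) (s : ℂ) : ℂ :=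
  Complex.exp (Complex.I * (Real.pi : ℂ) * (η k : ℂ)) *
    Complex.exp (((V : ℂ) / (Real.pi : ℂ)) * (s ^ 3 / 3 - (k : ℂ) ^ 2 * s / 4))

section selbergFunctionalFactor

variable (V : ℝ) (η : ℤ → ℝ)

theorem selbergFunctionalFactor_ne_zero (k : ℤ) (s : ℂ) : selbergFunctionalFactor V η k s ≠ 0 :=
  mul_ne_zero (Complex.exp_ne_zero _) (Complex.exp_ne_zero _)

theorem continuous_selbergFunctionalFactor (k : ℤ) :
    Continuous (selbergFunctionalFactor V η k) := by
  unfold selbergFunctionalFactor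
  fun_prop

theorem selbergFunctionalFactor_div_sq (n : ℕ) :
    (selbergFunctionalFactor V η (2 * n - 1) (-n - 1 / 2) /
        selbergFunctionalFactor V η (2 * n + 1) (-n + 1 / 2)) ^ 2 =
      Complex.exp (-(2 / (Real.pi : ℂ)) * (2 * (n : ℂ) ^ 2 - 1 / 6) * (V : ℂ) -
        2 * (Real.pi : ℂ) * Complex.I *
          ((η (2 * (n : ℤ) + 1) : ℂ) - (η (2 * (n : ℤ) - 1) : ℂ))) := by
  simp only [selbergFunctionalFactor, ← Complex.exp_add, ← Complex.exp_sub,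
    ← Complex.exp_nat_mul]
  congr 1
  have hπ : (Real.pi : ℂ) ≠ 0 := Complex.ofReal_ne_zero.mpr Real.pi_ne_zero
  push_cast
  field_simp
  ring

theorem tendsto_selbergFunctionalFactor_div_sq (n : ℕ) :
    Tendsto (fun s => (selbergFunctionalFactor V η (2 * n - 1) (s - n - 1 / 2) /
        selbergFunctionalFactor V η (2 * n + 1) (s - n + 1 / 2)) ^ 2) (𝓝 0)
      (𝓝 (Complex.exp (-(2 / (Real.pi : ℂ)) * (2 * (n : ℂ) ^ 2 - 1 / 6) * (V : ℂ) -
        2 * (Real.pi : ℂ) * Complex.I *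
          ((η (2 * (n : ℤ) + 1) : ℂ) - (η (2 * (n : ℤ) - 1) : ℂ))))) := by
  refine ((((continuous_selbergFunctionalFactor V η _).comp (by fun_prop)).div
    ((continuous_selbergFunctionalFactor V η _).comp (by fun_prop))
    fun s => selbergFunctionalFactor_ne_zero V η _ _).pow 2).tendsto' 0 _ ?_
  simpa using selbergFunctionalFactor_div_sq V η n

end selbergFunctionalFactor

theorem statement13_general (V : ℝ) (η : ℤ → ℝ) (𝒵 : ℤ → ℂ → ℂ)
    (hentire : ∀ k : ℤ, Differentiable ℂ (𝒵 k))
    (hfe : ∀ (k : ℤ) (s : ℂ), 𝒵 k (1 + s) =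
      Complex.exp (Complex.I * (Real.pi : ℂ) * (η k : ℂ)) *
      Complex.exp (((V : ℂ) / (Real.pi : ℂ)) * (s ^ 3 / 3 - (k : ℂ) ^ 2 * s / 4)) *
      𝒵 (-k) (1 - s))
    (n : ℕ) :
    Filter.Tendsto
      (fun s : ℂ =>
        ((𝒵 (2 * (n : ℤ) - 1) (s - (n : ℂ) + 1 / 2) *
            𝒵 (-(2 * (n : ℤ) + 1)) (s + (n : ℂ) + 1 / 2)) /
         (𝒵 (2 * (n : ℤ) + 1) (s - (n : ℂ) + 3 / 2) *
            𝒵 (-(2 * (n : ℤ) - 1)) (s + (n : ℂ) + 3 / 2))) ^ 2)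
      (nhdsWithin 0 {s : ℂ | 𝒵 (2 * (n : ℤ) + 1) (s - (n : ℂ) + 3 / 2) ≠ 0 ∧
        𝒵 (-(2 * (n : ℤ) - 1)) (s + (n : ℂ) + 3 / 2) ≠ 0})
      (nhds (Complex.exp
        (-(2 / (Real.pi : ℂ)) * (2 * (n : ℂ) ^ 2 - 1 / 6) * (V : ℂ) -
          2 * (Real.pi : ℂ) * Complex.I *
            ((η (2 * (n : ℤ) + 1) : ℂ) - (η (2 * (n : ℤ) - 1) : ℂ))))) := by
  set S := {s : ℂ | 𝒵 (2 * (n : ℤ) + 1) (s - (n : ℂ) + 3 / 2) ≠ 0 ∧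
    𝒵 (-(2 * (n : ℤ) - 1)) (s + (n : ℂ) + 3 / 2) ≠ 0}
  have fe_lower : ∀ s : ℂ, 𝒵 (2 * n - 1) (s - n + 1 / 2) = selbergFunctionalFactor V η
      (2 * n - 1) (s - n - 1 / 2) * 𝒵 (-(2 * n - 1)) (-s + n + 3 / 2) := fun s => by
    rw [show s - n + 1 / 2 = 1 + (s - n - 1 / 2) by ring, hfe]
    congr 2
    ring
  have fe_upper : ∀ s : ℂ, 𝒵 (2 * n + 1) (s - n + 3 / 2) = selbergFunctionalFactor V η
      (2 * n + 1) (s - n + 1 / 2) * 𝒵 (-(2 * n + 1)) (-s + n + 1 / 2) := fun s => by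
    rw [show s - n + 3 / 2 = 1 + (s - n + 1 / 2) by ring, hfe]
    congr 2
    ring
  have h_lower : Tendsto
      (fun s => (𝒵 (-(2 * n - 1)) (-s + n + 3 / 2) / 𝒵 (-(2 * n - 1)) (s + n + 3 / 2)) ^ 2)
      (𝓝[S] 0) (𝓝 1) :=
    tendsto_nhdsWithin_mono_left (fun s hs => hs.2)
      (AnalyticAt.tendsto_div_comp_neg_sq (f := fun t => 𝒵 (-(2 * n - 1)) (t + n + 3 / 2))
        (((hentire _).comp (by fun_prop)).analyticAt 0))
  have h_upper : Tendsto
      (fun s => (𝒵 (-(2 * n + 1)) (- -s + n + 1 / 2) / 𝒵 (-(2 * n + 1)) (-s + n + 1 / 2)) ^ 2)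
      (𝓝[S] 0) (𝓝 1) :=
    tendsto_nhdsWithin_mono_left (fun s hs => right_ne_zero_of_mul (fe_upper s ▸ hs.1))
      (AnalyticAt.tendsto_div_comp_neg_sq (f := fun t => 𝒵 (-(2 * n + 1)) (-t + n + 1 / 2))
        (((hentire _).comp (by fun_prop)).analyticAt 0))
  have h := (((tendsto_selbergFunctionalFactor_div_sq V η n).mono_left nhdsWithin_le_nhds).mul
    h_lower).mul h_upper
  rw [mul_one, mul_one] at h
  refine h.congr fun s => ?_
  rw [fe_lower, fe_upper, neg_neg]
  ring

/-- limit value of `G_n(s)⁴ R_{ρ_{2n−1}}(s)²` at `s = 0`, expressed through the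
entire extensions `𝒵 k` of the Selberg zeta functions. -/
theorem statement13 {I : Type*} [Countable I] (ℓ θ : I → ℝ)
    (hℓ : ∀ i, 0 < ℓ i) (δ : ℝ) (hδ : δ < 2)
    (hsum : Summable fun i => Real.exp (-δ * ℓ i))
    (V : ℝ) (hV : 0 < V) (η : ℤ → ℝ) (𝒵 : ℤ → ℂ → ℂ)
    (hentire : ∀ k : ℤ, Differentiable ℂ (𝒵 k))
    (hagree : ∀ (k : ℤ) (s : ℂ), 2 < s.re → 𝒵 k s = Zs ℓ θ k s)
    (hfe : ∀ (k : ℤ) (s : ℂ), 𝒵 k (1 + s) =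
      Complex.exp (Complex.I * (Real.pi : ℂ) * (η k : ℂ)) *
      Complex.exp (((V : ℂ) / (Real.pi : ℂ)) * (s ^ 3 / 3 - (k : ℂ) ^ 2 * s / 4)) *
      𝒵 (-k) (1 - s))
    (n : ℕ) (hn : 1 ≤ n) :
    Filter.Tendsto
      (fun s : ℂ =>
        ((𝒵 (2 * (n : ℤ) - 1) (s - (n : ℂ) + 1 / 2) *
            𝒵 (-(2 * (n : ℤ) + 1)) (s + (n : ℂ) + 1 / 2)) /
         (𝒵 (2 * (n : ℤ) + 1) (s - (n : ℂ) + 3 / 2) *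
            𝒵 (-(2 * (n : ℤ) - 1)) (s + (n : ℂ) + 3 / 2))) ^ 2)
      (nhdsWithin 0 {s : ℂ | 𝒵 (2 * (n : ℤ) + 1) (s - (n : ℂ) + 3 / 2) ≠ 0 ∧
        𝒵 (-(2 * (n : ℤ) - 1)) (s + (n : ℂ) + 3 / 2) ≠ 0})
      (nhds (Complex.exp
        (-(2 / (Real.pi : ℂ)) * (2 * (n : ℂ) ^ 2 - 1 / 6) * (V : ℂ) -
          2 * (Real.pi : ℂ) * Complex.I *
            ((η (2 * (n : ℤ) + 1) : ℂ) - (η (2 * (n : ℤ) - 1) : ℂ))))) :=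
  statement13_general V η 𝒵 hentire hfe n
end

section
/- (Functional equation of the Ruelle zeta function R_{ρ_m}.) Assume in addition that η(−k) = −η(k) for all k ∈ ℤ. Let m ∈ ℕ. Then for every s ∈ ℂ the following cross-multiplied identity holds: 𝒵(m)(s − m/2) · 𝒵(−m)(s + m/2 + 2) · 𝒵(m+2)(−s − m/2 + 1) · 𝒵(−(m+2))(−s + m/2 + 1) = exp( (4·(m+1)·V/π)·s ) · 𝒵(m)(−s − m/2) · 𝒵(−m)(−s + m/2 + 2) · 𝒵(m+2)(s − m/2 + 1) · 𝒵(−(m+2))(s + m/2 + 1). (Equivalently, the meromorphic continuation of the Ruelle zeta function R_{ρ_m}, expressed through the Selberg zeta functions via the first factorization, satisfies R_{ρ_m}(s) = R_{ρ_m}(−s)·exp((4s/π)·dim(V_{ρ_m})·V) with dim(V_{ρ_m}) = m + 1.) -/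
/-- functional equation of the Ruelle zeta function `R_{ρ_m}`, in
cross-multiplied form through the entire extensions `𝒵 k` of the Selberg zeta functions. -/
theorem statement14 {I : Type*} [Countable I] (ℓ θ : I → ℝ)
    (hℓ : ∀ i, 0 < ℓ i) (δ : ℝ) (hδ : δ < 2)
    (hsum : Summable fun i => Real.exp (-δ * ℓ i))
    (V : ℝ) (hV : 0 < V) (η : ℤ → ℝ) (𝒵 : ℤ → ℂ → ℂ)
    (hentire : ∀ k : ℤ, Differentiable ℂ (𝒵 k))
    (hagree : ∀ (k : ℤ) (s : ℂ), 2 < s.re → 𝒵 k s = Zs ℓ θ k s)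
    (hfe : ∀ (k : ℤ) (s : ℂ), 𝒵 k (1 + s) =
      Complex.exp (Complex.I * (Real.pi : ℂ) * (η k : ℂ)) *
      Complex.exp (((V : ℂ) / (Real.pi : ℂ)) * (s ^ 3 / 3 - (k : ℂ) ^ 2 * s / 4)) *
      𝒵 (-k) (1 - s))
    (hodd : ∀ k : ℤ, η (-k) = -η k)
    (m : ℕ) (s : ℂ) :
    𝒵 (m : ℤ) (s - (m : ℂ) / 2) * 𝒵 (-(m : ℤ)) (s + (m : ℂ) / 2 + 2) *
      𝒵 ((m : ℤ) + 2) (-s - (m : ℂ) / 2 + 1) * 𝒵 (-((m : ℤ) + 2)) (-s + (m : ℂ) / 2 + 1) =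
    Complex.exp ((4 * ((m : ℂ) + 1) * (V : ℂ) / (Real.pi : ℂ)) * s) *
      (𝒵 (m : ℤ) (-s - (m : ℂ) / 2) * 𝒵 (-(m : ℤ)) (-s + (m : ℂ) / 2 + 2) *
        𝒵 ((m : ℤ) + 2) (s - (m : ℂ) / 2 + 1) * 𝒵 (-((m : ℤ) + 2)) (s + (m : ℂ) / 2 + 1)) := by
  have h1 := hfe (m : ℤ) (s - (m : ℂ) / 2 - 1)
  have h2 := hfe (-(m : ℤ)) (s + (m : ℂ) / 2 + 1)
  have h3 := hfe ((m : ℤ) + 2) (-s - (m : ℂ) / 2)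
  have h4 := hfe (-((m : ℤ) + 2)) (-s + (m : ℂ) / 2)
  have e1 : (1 : ℂ) + (s - (m : ℂ) / 2 - 1) = s - (m : ℂ) / 2 := by ring
  have e1' : (1 : ℂ) - (s - (m : ℂ) / 2 - 1) = -s + (m : ℂ) / 2 + 2 := by ring
  have e2 : (1 : ℂ) + (s + (m : ℂ) / 2 + 1) = s + (m : ℂ) / 2 + 2 := by ring
  have e2' : (1 : ℂ) - (s + (m : ℂ) / 2 + 1) = -s - (m : ℂ) / 2 := by ring
  have e3 : (1 : ℂ) + (-s - (m : ℂ) / 2) = -s - (m : ℂ) / 2 + 1 := by ring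
  have e3' : (1 : ℂ) - (-s - (m : ℂ) / 2) = s + (m : ℂ) / 2 + 1 := by ring
  have e4 : (1 : ℂ) + (-s + (m : ℂ) / 2) = -s + (m : ℂ) / 2 + 1 := by ring
  have e4' : (1 : ℂ) - (-s + (m : ℂ) / 2) = s - (m : ℂ) / 2 + 1 := by ring
  rw [e1, e1'] at h1
  rw [e2, e2', neg_neg] at h2
  rw [e3, e3'] at h3
  rw [e4, e4', neg_neg] at h4
  rw [hodd] at h2 h4
  rw [h1, h2, h3, h4]
  have hcast : ((-((m : ℤ) + 2) : ℤ) : ℂ) = -((m : ℂ) + 2) := by push_cast; ring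
  have hcastm : ((-(m : ℤ) : ℤ) : ℂ) = -(m : ℂ) := by push_cast; ring
  have hcast2 : (((m : ℤ) + 2 : ℤ) : ℂ) = (m : ℂ) + 2 := by push_cast; ring
  rw [hcast, hcastm, hcast2]
  set Z1 := 𝒵 (m : ℤ) (-s - (m : ℂ) / 2)
  set Z2 := 𝒵 (-(m : ℤ)) (-s + (m : ℂ) / 2 + 2)
  set Z3 := 𝒵 ((m : ℤ) + 2) (s - (m : ℂ) / 2 + 1)
  set Z4 := 𝒵 (-((m : ℤ) + 2)) (s + (m : ℂ) / 2 + 1)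
  have key :
      Complex.exp (Complex.I * (Real.pi : ℂ) * (η m : ℂ)) *
        Complex.exp (((V : ℂ) / (Real.pi : ℂ)) *
          ((s - (m : ℂ) / 2 - 1) ^ 3 / 3 - (m : ℂ) ^ 2 * (s - (m : ℂ) / 2 - 1) / 4)) *
      (Complex.exp (Complex.I * (Real.pi : ℂ) * ((-η m : ℝ) : ℂ)) *
        Complex.exp (((V : ℂ) / (Real.pi : ℂ)) *
          ((s + (m : ℂ) / 2 + 1) ^ 3 / 3 - (-(m : ℂ)) ^ 2 * (s + (m : ℂ) / 2 + 1) / 4))) *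
      (Complex.exp (Complex.I * (Real.pi : ℂ) * (η ((m : ℤ) + 2) : ℂ)) *
        Complex.exp (((V : ℂ) / (Real.pi : ℂ)) *
          ((-s - (m : ℂ) / 2) ^ 3 / 3 - ((m : ℂ) + 2) ^ 2 * (-s - (m : ℂ) / 2) / 4))) *
      (Complex.exp (Complex.I * (Real.pi : ℂ) * ((-η ((m : ℤ) + 2) : ℝ) : ℂ)) *
        Complex.exp (((V : ℂ) / (Real.pi : ℂ)) *
          ((-s + (m : ℂ) / 2) ^ 3 / 3 - (-((m : ℂ) + 2)) ^ 2 * (-s + (m : ℂ) / 2) / 4))) =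
      Complex.exp ((4 * ((m : ℂ) + 1) * (V : ℂ) / (Real.pi : ℂ)) * s) := by
    simp only [← Complex.exp_add]
    congr 1
    push_cast
    ring
  calc
    Complex.exp (Complex.I * (Real.pi : ℂ) * (η m : ℂ)) *
        Complex.exp (((V : ℂ) / (Real.pi : ℂ)) *
          ((s - (m : ℂ) / 2 - 1) ^ 3 / 3 - (m : ℂ) ^ 2 * (s - (m : ℂ) / 2 - 1) / 4)) * Z2 *
      (Complex.exp (Complex.I * (Real.pi : ℂ) * ((-η m : ℝ) : ℂ)) *
        Complex.exp (((V : ℂ) / (Real.pi : ℂ)) *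
          ((s + (m : ℂ) / 2 + 1) ^ 3 / 3 - (-(m : ℂ)) ^ 2 * (s + (m : ℂ) / 2 + 1) / 4)) * Z1) *
      (Complex.exp (Complex.I * (Real.pi : ℂ) * (η ((m : ℤ) + 2) : ℂ)) *
        Complex.exp (((V : ℂ) / (Real.pi : ℂ)) *
          ((-s - (m : ℂ) / 2) ^ 3 / 3 - ((m : ℂ) + 2) ^ 2 * (-s - (m : ℂ) / 2) / 4)) * Z4) *
      (Complex.exp (Complex.I * (Real.pi : ℂ) * ((-η ((m : ℤ) + 2) : ℝ) : ℂ)) *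
        Complex.exp (((V : ℂ) / (Real.pi : ℂ)) *
          ((-s + (m : ℂ) / 2) ^ 3 / 3 - (-((m : ℂ) + 2)) ^ 2 * (-s + (m : ℂ) / 2) / 4)) * Z3)
      = (Complex.exp (Complex.I * (Real.pi : ℂ) * (η m : ℂ)) *
        Complex.exp (((V : ℂ) / (Real.pi : ℂ)) *
          ((s - (m : ℂ) / 2 - 1) ^ 3 / 3 - (m : ℂ) ^ 2 * (s - (m : ℂ) / 2 - 1) / 4)) *
      (Complex.exp (Complex.I * (Real.pi : ℂ) * ((-η m : ℝ) : ℂ)) *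
        Complex.exp (((V : ℂ) / (Real.pi : ℂ)) *
          ((s + (m : ℂ) / 2 + 1) ^ 3 / 3 - (-(m : ℂ)) ^ 2 * (s + (m : ℂ) / 2 + 1) / 4))) *
      (Complex.exp (Complex.I * (Real.pi : ℂ) * (η ((m : ℤ) + 2) : ℂ)) *
        Complex.exp (((V : ℂ) / (Real.pi : ℂ)) *
          ((-s - (m : ℂ) / 2) ^ 3 / 3 - ((m : ℂ) + 2) ^ 2 * (-s - (m : ℂ) / 2) / 4))) *
      (Complex.exp (Complex.I * (Real.pi : ℂ) * ((-η ((m : ℤ) + 2) : ℝ) : ℂ)) *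
        Complex.exp (((V : ℂ) / (Real.pi : ℂ)) *
          ((-s + (m : ℂ) / 2) ^ 3 / 3 - (-((m : ℂ) + 2)) ^ 2 * (-s + (m : ℂ) / 2) / 4)))) *
        (Z1 * Z2 * Z3 * Z4) := by ring
    _ = Complex.exp ((4 * ((m : ℂ) + 1) * (V : ℂ) / (Real.pi : ℂ)) * s) *
        (Z1 * Z2 * Z3 * Z4) := by rw [key]
end
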